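/- arXiv:2012.12216 — 5 statements merged into one kernel-verified Lean document; each statement's English description precedes it below -/
import Mathlib

section
/- Let p(t) = \sum_{i=1}^\infty c_i t^i be a power series with complex coefficients such that c_1 = 1 and \sum_{i=1}^\infty |c_i| \le M for some M \ge 3/2. Then there is a universal constant c > 0 such that \sup_{t \in [0,1]} |p(t)| \ge c / (\log M)^2. -/
open Polynomial Real

noncomputable section

namespace MyMarkov

variable (N : ℕ)

abbrev Tp : Polynomial ℝ := Polynomial.Chebyshev.T ℝ (N : ℤ)

lemma cheb_d1 (θ : ℝ) :
    (derivative (Tp N)).eval (cos θ) * sin θ = N * sin (N * θ) := by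
  have hfg : (fun θ : ℝ => (Tp N).eval (cos θ)) = fun θ : ℝ => cos ((N : ℝ) * θ) :=
    funext fun θ => Polynomial.Chebyshev.T_real_cos θ N
  have h1 : HasDerivAt (fun θ : ℝ => (Tp N).eval (cos θ))
      ((derivative (Tp N)).eval (cos θ) * -sin θ) θ :=
    ((Tp N).hasDerivAt (cos θ)).comp θ (Real.hasDerivAt_cos θ)
  have h2 : HasDerivAt (fun θ : ℝ => cos ((N : ℝ) * θ)) (-sin ((N:ℝ) * θ) * N) θ := by
    simpa [Function.comp_def] using (Real.hasDerivAt_cos ((N:ℝ) * θ)).comp θ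
      ((hasDerivAt_id θ).const_mul (N:ℝ))
  rw [hfg] at h1
  have := h1.unique h2
  nlinarith [this]

lemma cheb_d2 (θ : ℝ) :
    (derivative (derivative (Tp N))).eval (cos θ) * sin θ ^ 2
      - (derivative (Tp N)).eval (cos θ) * cos θ = -(N:ℝ)^2 * cos (N * θ) := by
  have hfg : (fun θ : ℝ => (derivative (Tp N)).eval (cos θ) * -sin θ)
      = fun θ : ℝ => -sin ((N : ℝ) * θ) * N := by
    funext θ
    have := cheb_d1 N θ
    push_cast at this ⊢
    nlinarith [this]
  have h1 : HasDerivAt (fun θ : ℝ => (derivative (Tp N)).eval (cos θ) * -sin θ)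
      (((derivative (derivative (Tp N))).eval (cos θ) * -sin θ) * -sin θ
        + (derivative (Tp N)).eval (cos θ) * -cos θ) θ := by
    exact (((derivative (Tp N)).hasDerivAt (cos θ)).comp θ (Real.hasDerivAt_cos θ)).mul
      (Real.hasDerivAt_sin θ).neg
  have h2 : HasDerivAt (fun θ : ℝ => -sin ((N:ℝ) * θ) * N)
      (-(cos ((N:ℝ)*θ) * N) * N) θ := by
    have : HasDerivAt (fun θ : ℝ => sin ((N:ℝ) * θ)) (cos ((N:ℝ)*θ) * N) θ := by
      simpa [Function.comp_def] using (Real.hasDerivAt_sin ((N:ℝ) * θ)).comp θ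
        ((hasDerivAt_id θ).const_mul (N:ℝ))
    simpa using (this.neg).mul_const (N:ℝ)
  rw [hfg] at h1
  have := h1.unique h2
  push_cast at this ⊢
  nlinarith [this]

end MyMarkov

namespace MyMarkov

lemma tdeg : ∀ n : ℕ, (Polynomial.Chebyshev.T ℝ (n:ℤ)).natDegree ≤ n := by
  intro n
  induction n using Nat.strong_induction_on with
  | _ n ih =>
    match n with
    | 0 => simp [Polynomial.Chebyshev.T_zero]
    | 1 => simpa [Polynomial.Chebyshev.T_one] using natDegree_X_le
    | (n+2) =>
      have h : ((n:ℤ)+2) = ((n+1:ℕ):ℤ) + 1 := by push_cast; ring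
      have := Polynomial.Chebyshev.T_add_two ℝ (n:ℤ)
      have e : (Polynomial.Chebyshev.T ℝ ((n+2:ℕ):ℤ))
          = 2 * X * Polynomial.Chebyshev.T ℝ ((n+1:ℕ):ℤ) - Polynomial.Chebyshev.T ℝ (n:ℤ) := by
        push_cast
        exact this
      rw [e]
      refine le_trans (natDegree_sub_le _ _) ?_
      have h1 : (2 * X * Polynomial.Chebyshev.T ℝ ((n+1:ℕ):ℤ)).natDegree ≤ n + 2 := by
        refine le_trans (natDegree_mul_le) ?_
        have : (2 * X : ℝ[X]).natDegree ≤ 1 := le_trans natDegree_mul_le (by simp)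
        have h2 := ih (n+1) (by omega)
        omega
      have h3 := ih n (by omega)
      simp only [max_le_iff]
      exact ⟨h1, by omega⟩

end MyMarkov

namespace MyMarkov

variable (N : ℕ)

/-- Chebyshev extrema nodes on [-1,1]. -/
def η (j : Fin (N+1)) : ℝ := Real.cos ((j : ℝ) * π / N)

def Wp : Polynomial ℝ := (X^2 - 1) * derivative (Tp N)

lemma theta_mem (hN : 1 ≤ N) (j : Fin (N+1)) : (j:ℝ) * π / N ∈ Set.Icc 0 π := by
  have hj : (j:ℝ) ≤ N := by exact_mod_cast Nat.lt_succ_iff.mp j.isLt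
  have hj0 : (0:ℝ) ≤ (j:ℝ) := by positivity
  have hNpos : (0:ℝ) < N := by exact_mod_cast hN
  constructor
  · positivity
  · rw [div_le_iff₀ hNpos]
    nlinarith [Real.pi_pos]

lemma eta_inj (hN : 1 ≤ N) : Function.Injective (η N) := by
  intro i j hij
  have hNpos : (0:ℝ) < N := by exact_mod_cast hN
  have h0 := Real.injOn_cos (theta_mem N hN i) (theta_mem N hN j) hij
  have hN0 : (N:ℝ) ≠ 0 := ne_of_gt hNpos
  field_simp at h0
  have h2 : ((i:ℕ):ℝ) = ((j:ℕ):ℝ) := by linarith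
  exact Fin.ext (by exact_mod_cast h2)

lemma eval_dW (θ : ℝ) : (derivative (Wp N)).eval (Real.cos θ)
    = Real.cos θ * (derivative (Tp N)).eval (Real.cos θ) + (N:ℝ)^2 * Real.cos (N * θ) := by
  have hsc : Real.sin θ ^ 2 = 1 - Real.cos θ ^ 2 := by
    have := Real.sin_sq_add_cos_sq θ; linarith
  have hd2 := cheb_d2 N θ
  have hW : derivative (Wp N) = C 2 * X * derivative (Tp N)
      + (X^2 - 1) * derivative (derivative (Tp N)) := by
    unfold Wp
    rw [derivative_mul]
    congr 1
    rw [derivative_sub, derivative_one, derivative_X_pow]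
    push_cast
    ring
  rw [hW]
  simp only [eval_add, eval_mul, eval_sub, eval_pow, eval_X, eval_one, eval_C]
  linear_combination (-1) * hd2
    + (eval (Real.cos θ) (derivative (derivative (Tp N)))) * hsc

lemma tp_deriv_one : (derivative (Tp N)).eval 1 = (N:ℝ)^2 := by
  have := cheb_d2 N 0
  simp at this
  linarith

lemma tp_deriv_neg_one : (derivative (Tp N)).eval (-1) = -((N:ℝ)^2) * (-1)^N := by
  have h := cheb_d2 N π
  have hc : Real.cos ((N:ℝ) * π) = (-1)^N := by
    simpa using Real.cos_nat_mul_pi_sub 0 N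
  rw [hc] at h
  simp [Real.sin_pi, Real.cos_pi] at h
  linarith [h]

lemma eta_zero : η N 0 = 1 := by simp [η]

lemma eta_last (hN : 1 ≤ N) : η N (Fin.last N) = -1 := by
  have hNpos : (0:ℝ) < N := by exact_mod_cast hN
  have hN0 : (N:ℝ) ≠ 0 := ne_of_gt hNpos
  simp only [η, Fin.val_last]
  have h : (N:ℝ) * π / N = π := by field_simp
  rw [h, Real.cos_pi]

lemma dW_at_one : (derivative (Wp N)).eval 1 = 2 * (N:ℝ)^2 := by
  have h := eval_dW N 0
  simp at h
  rw [h, tp_deriv_one]; ring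

lemma tp_deriv_interior (hN : 1 ≤ N) (j : Fin (N+1)) (hj0 : j ≠ 0) (hjN : j ≠ Fin.last N) :
    (derivative (Tp N)).eval (η N j) = 0 := by
  have hNpos : (0:ℝ) < N := by exact_mod_cast hN
  have hN0 : (N:ℝ) ≠ 0 := ne_of_gt hNpos
  have h1 := cheb_d1 N ((j:ℝ) * π / N)
  have hsin0 : Real.sin ((N:ℝ) * ((j:ℝ) * π / N)) = 0 := by
    have h : (N:ℝ) * ((j:ℝ) * π / N) = (j:ℝ) * π := by field_simp
    rw [h]; exact Real.sin_nat_mul_pi j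
  have hlt : (j:ℝ) * π / N < π := by
    have hj : (j:ℕ) < N := by
      have h2 := Nat.lt_succ_iff.mp j.isLt
      rcases lt_or_eq_of_le h2 with h | h
      · exact h
      · exact absurd (Fin.ext (by simp [h, Fin.val_last]) : j = Fin.last N) hjN
    have hj' : (j:ℝ) < N := by exact_mod_cast hj
    rw [div_lt_iff₀ hNpos]
    nlinarith [Real.pi_pos]
  have hgt : 0 < (j:ℝ) * π / N := by
    have hj : 0 < (j:ℕ) := Nat.pos_of_ne_zero (fun h => hj0 (Fin.ext (by simp [h])))
    have hj' : (0:ℝ) < (j:ℝ) := by exact_mod_cast hj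
    positivity
  have hsinpos : 0 < Real.sin ((j:ℝ) * π / N) := Real.sin_pos_of_pos_of_lt_pi hgt hlt
  rw [hsin0, mul_zero] at h1
  unfold η
  rcases mul_eq_zero.mp h1 with h | h
  · exact h
  · linarith

lemma dW_at_node (hN : 1 ≤ N) (j : Fin (N+1)) :
    (N:ℝ)^2 ≤ |(derivative (Wp N)).eval (η N j)| := by
  have hNpos : (0:ℝ) < N := by exact_mod_cast hN
  have hN0 : (N:ℝ) ≠ 0 := ne_of_gt hNpos
  have heval := eval_dW N ((j:ℝ) * π / N)
  have hNj : (N:ℝ) * ((j:ℝ) * π / N) = (j:ℝ) * π := by field_simp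
  have hcos : Real.cos ((N:ℝ) * ((j:ℝ) * π / N)) = (-1)^(j:ℕ) := by
    rw [hNj]; simpa using Real.cos_nat_mul_pi_sub 0 j
  rw [hcos] at heval
  have hetaj : η N j = Real.cos ((j:ℝ) * π / N) := rfl
  by_cases hj0 : j = 0
  · subst hj0
    rw [eta_zero, dW_at_one N, abs_of_pos (by positivity)]
    nlinarith [sq_nonneg (N:ℝ)]
  · by_cases hjN : j = Fin.last N
    · subst hjN
      rw [eta_last N hN]
      have hcv : Real.cos (((Fin.last N : Fin (N+1)):ℝ) * π / N) = -1 := by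
        rw [← eta_last N hN]; rfl
      rw [hcv] at heval
      rw [heval, tp_deriv_neg_one]
      have hval : (-1:ℝ) * (-(N:ℝ)^2 * (-1)^N) + (N:ℝ)^2 * (-1)^((Fin.last N : Fin (N+1)):ℕ)
          = 2 * (N:ℝ)^2 * (-1)^N := by
        simp only [Fin.val_last]
        ring
      rw [hval, abs_mul]
      rcases Nat.even_or_odd N with h | h
      · rw [h.neg_one_pow, abs_one, mul_one, abs_of_pos (by positivity)]; nlinarith
      · rw [h.neg_one_pow, abs_neg, abs_one, mul_one, abs_of_pos (by positivity)]; nlinarith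
    · have hT0 := tp_deriv_interior N hN j hj0 hjN
      rw [← hetaj] at heval
      rw [heval, hT0, mul_zero, zero_add]
      simp [abs_mul, abs_pow, abs_of_pos hNpos]

end MyMarkov

namespace MyMarkov

open Finset

variable (N : ℕ)

def Vp : Polynomial ℝ := ∏ i : Fin (N+1), (X - C (η N i))

lemma Vp_monic : (Vp N).Monic :=
  monic_prod_of_monic _ _ (fun i _ => monic_X_sub_C _)

lemma Vp_natDegree : (Vp N).natDegree = N + 1 := by
  unfold Vp
  rw [natDegree_prod _ _ (fun i _ => X_sub_C_ne_zero _)]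
  simp

lemma Vp_eval_node (j : Fin (N+1)) : (Vp N).eval (η N j) = 0 := by
  unfold Vp
  rw [eval_prod]
  exact Finset.prod_eq_zero (mem_univ j) (by simp)

lemma Wp_eval_node (hN : 1 ≤ N) (j : Fin (N+1)) : (Wp N).eval (η N j) = 0 := by
  unfold Wp
  rw [eval_mul]
  by_cases hj0 : j = 0
  · subst hj0; rw [eta_zero]; simp
  · by_cases hjN : j = Fin.last N
    · subst hjN; rw [eta_last N hN]; simp
    · rw [tp_deriv_interior N hN j hj0 hjN, mul_zero]

lemma Wp_natDegree (hN : 1 ≤ N) : (Wp N).natDegree ≤ N + 1 := by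
  unfold Wp
  refine le_trans natDegree_mul_le ?_
  have h1 : ((X:ℝ[X])^2 - 1).natDegree = 2 := by
    have : ((X:ℝ[X])^2 - 1) = X^2 - C 1 := by simp
    rw [this, natDegree_X_pow_sub_C]
  have h2 : (derivative (Tp N)).natDegree ≤ N - 1 :=
    le_trans (natDegree_derivative_le _) (Nat.sub_le_sub_right (tdeg N) 1)
  omega

def cW : ℝ := (Wp N).coeff (N+1)

lemma W_fact (hN : 1 ≤ N) : Wp N = C (cW N) * Vp N := by
  have hD : (Wp N - C (cW N) * Vp N).natDegree ≤ N := by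
    rw [natDegree_le_iff_coeff_eq_zero]
    intro m hm
    rw [coeff_sub, coeff_C_mul]
    rcases eq_or_lt_of_le (Nat.succ_le_of_lt hm) with h | h
    · rw [← h]
      have hv : (Vp N).coeff (N+1) = 1 := by
        have := (Vp_monic N).coeff_natDegree
        rwa [Vp_natDegree N] at this
      rw [hv, mul_one, cW, sub_self]
    · have h1 : (Wp N).coeff m = 0 :=
        coeff_eq_zero_of_natDegree_lt (lt_of_le_of_lt (Wp_natDegree N hN) h)
      have h2 : (Vp N).coeff m = 0 :=
        coeff_eq_zero_of_natDegree_lt (by rw [Vp_natDegree N]; exact h)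
      rw [h1, h2, mul_zero, sub_zero]
  have hzero : Wp N - C (cW N) * Vp N = 0 := by
    apply eq_zero_of_natDegree_lt_card_of_eval_eq_zero _ (eta_inj N hN)
    · intro j
      rw [eval_sub, eval_mul, eval_C, Wp_eval_node N hN j, Vp_eval_node N j,
        mul_zero, sub_zero]
    · rw [Fintype.card_fin]
      omega
  linear_combination hzero

lemma Vp_deriv_node (j : Fin (N+1)) :
    (derivative (Vp N)).eval (η N j) = ∏ i ∈ univ.erase j, (η N j - η N i) := by
  have hsplit : Vp N = (X - C (η N j)) * ∏ i ∈ univ.erase j, (X - C (η N i)) :=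
    (Finset.mul_prod_erase univ _ (mem_univ j)).symm
  rw [hsplit, derivative_mul]
  simp only [derivative_sub, derivative_X, derivative_C, sub_zero, eval_add, eval_mul,
    eval_sub, eval_X, eval_C, sub_self, zero_mul, mul_zero, one_mul, add_zero, zero_add]
  rw [eval_prod]
  simp

lemma dW_node_eq (hN : 1 ≤ N) (j : Fin (N+1)) :
    (derivative (Wp N)).eval (η N j) = cW N * ∏ i ∈ univ.erase j, (η N j - η N i) := by
  rw [W_fact N hN, derivative_C_mul, eval_mul, eval_C, Vp_deriv_node N j]

lemma cW_mul_prod_zero (hN : 1 ≤ N) :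
    cW N * ∏ i ∈ univ.erase (0 : Fin (N+1)), (1 - η N i) = 2 * (N:ℝ)^2 := by
  have h := dW_node_eq N hN 0
  rw [eta_zero] at h
  rw [← h, dW_at_one]

lemma one_sub_eta (hN : 1 ≤ N) (j : Fin (N+1)) (hj : j ≠ 0) :
    2 * (j:ℝ)^2 / (N:ℝ)^2 ≤ 1 - η N j := by
  have hNpos : (0:ℝ) < N := by exact_mod_cast hN
  set θ : ℝ := (j:ℝ) * π / N with hθ
  have hmem := theta_mem N hN j
  have hc2 : Real.cos θ = 2 * Real.cos (θ/2)^2 - 1 := by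
    have := Real.cos_two_mul (θ/2)
    rw [show 2 * (θ/2) = θ by ring] at this
    exact this
  have hsc : Real.sin (θ/2)^2 + Real.cos (θ/2)^2 = 1 := Real.sin_sq_add_cos_sq _
  have hsin : (j:ℝ)/N ≤ Real.sin (θ/2) := by
    have h1 : 2 / π * (θ/2) ≤ Real.sin (θ/2) := by
      apply Real.mul_le_sin
      · positivity
      · rcases hmem with ⟨_, h2⟩; linarith
    have h2 : 2 / π * (θ/2) = (j:ℝ)/N := by
      rw [hθ]; field_simp
    linarith [h2 ▸ h1]
  have hsinnn : (0:ℝ) ≤ (j:ℝ)/N := by positivity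
  have hunfold : η N j = Real.cos θ := rfl
  rw [hunfold, hc2]
  have hsq : ((j:ℝ)/N)^2 ≤ Real.sin (θ/2)^2 := by nlinarith
  have : 2 * (j:ℝ)^2/(N:ℝ)^2 = 2 * ((j:ℝ)/N)^2 := by field_simp
  nlinarith [hsq]

lemma eta_lt_one (hN : 1 ≤ N) (j : Fin (N+1)) (hj : j ≠ 0) : 0 < 1 - η N j := by
  have h := one_sub_eta N hN j hj
  have hj1 : (1:ℝ) ≤ (j:ℝ) := by
    have : 1 ≤ (j:ℕ) := Nat.pos_of_ne_zero (fun h => hj (Fin.ext (by simp [h])))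
    exact_mod_cast this
  have hNpos : (0:ℝ) < N := by exact_mod_cast hN
  have hpos : 0 < 2 * (j:ℝ)^2 / (N:ℝ)^2 := by positivity
  linarith

end MyMarkov

namespace MyMarkov

open Finset

variable (N : ℕ)

lemma cW_ne (hN : 1 ≤ N) : cW N ≠ 0 := by
  intro h
  have h2 := cW_mul_prod_zero N hN
  rw [h, zero_mul] at h2
  have hNpos : (0:ℝ) < N := by exact_mod_cast hN
  nlinarith

lemma basis_deriv_bound (hN : 1 ≤ N) (j : Fin (N+1)) (hj : j ≠ 0) :
    |(derivative (Lagrange.basis univ (η N) j)).eval 1| ≤ 2 / (1 - η N j) := by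
  classical
  have hNpos : (0:ℝ) < N := by exact_mod_cast hN
  have h1mj : 0 < 1 - η N j := eta_lt_one N hN j hj
  have h0mem : (0 : Fin (N+1)) ∈ univ.erase j := mem_erase.mpr ⟨Ne.symm hj, mem_univ 0⟩
  set E : Finset (Fin (N+1)) := (univ.erase j).erase 0 with hE
  set Q : ℝ[X] := ∏ k ∈ E, Lagrange.basisDivisor (η N j) (η N k) with hQ
  have hsplit : Lagrange.basis univ (η N) j
      = Lagrange.basisDivisor (η N j) (η N 0) * Q := by
    rw [Lagrange.basis, hQ, hE]
    exact (Finset.mul_prod_erase _ _ h0mem).symm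
  have hbdeval : (Lagrange.basisDivisor (η N j) (η N 0)).eval 1 = 0 := by
    rw [eta_zero]; simp [Lagrange.basisDivisor]
  have hbdderiv : derivative (Lagrange.basisDivisor (η N j) (η N 0)) = C ((η N j - 1)⁻¹) := by
    rw [eta_zero, Lagrange.basisDivisor, derivative_C_mul]
    simp
  set P1 : ℝ := ∏ k ∈ E, (1 - η N k) with hP1
  set P2 : ℝ := ∏ k ∈ E, (η N j - η N k) with hP2
  have hQeval : Q.eval 1 = P2⁻¹ * P1 := by
    rw [hQ, eval_prod]
    rw [show (∏ k ∈ E, (Lagrange.basisDivisor (η N j) (η N k)).eval 1)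
        = ∏ k ∈ E, ((η N j - η N k)⁻¹ * (1 - η N k)) from
      Finset.prod_congr rfl (fun k _ => by simp [Lagrange.basisDivisor])]
    rw [Finset.prod_mul_distrib, Finset.prod_inv_distrib]
  have hderiv1 : (derivative (Lagrange.basis univ (η N) j)).eval 1
      = (η N j - 1)⁻¹ * (P2⁻¹ * P1) := by
    rw [hsplit, derivative_mul, eval_add, eval_mul, eval_mul, hbdeval, hbdderiv, eval_C,
      zero_mul, add_zero, hQeval]
  set a0 : ℝ := ∏ i ∈ univ.erase (0 : Fin (N+1)), (1 - η N i) with ha0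
  set aj : ℝ := ∏ i ∈ univ.erase j, (η N j - η N i) with haj
  have hjmem : j ∈ univ.erase (0 : Fin (N+1)) := mem_erase.mpr ⟨hj, mem_univ j⟩
  have h_a0 : a0 = (1 - η N j) * P1 := by
    rw [ha0, ← Finset.mul_prod_erase _ _ hjmem, hP1, hE, Finset.erase_right_comm]
  have h_aj : aj = (η N j - 1) * P2 := by
    rw [haj, ← Finset.mul_prod_erase _ _ h0mem, hP2, eta_zero]
  have hca0 : cW N * a0 = 2 * (N:ℝ)^2 := cW_mul_prod_zero N hN
  have hcaj : (N:ℝ)^2 ≤ |cW N * aj| := by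
    rw [← dW_node_eq N hN j]
    exact dW_at_node N hN j
  have hcaj_ne : cW N * aj ≠ 0 := by
    intro h; rw [h, abs_zero] at hcaj; nlinarith
  have haj_ne : aj ≠ 0 := fun h => hcaj_ne (by rw [h, mul_zero])
  have hP2_ne : P2 ≠ 0 := by
    intro h; rw [h, mul_zero] at h_aj; exact haj_ne h_aj
  have hkey : (derivative (Lagrange.basis univ (η N) j)).eval 1
      = a0 / ((1 - η N j) * aj) := by
    rw [hderiv1, h_a0, h_aj]
    have hne : η N j - 1 ≠ 0 := by intro h; rw [show η N j = 1 by linarith] at h1mj; linarith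
    field_simp
  have hkey2 : |(derivative (Lagrange.basis univ (η N) j)).eval 1|
      * ((1 - η N j) * |cW N * aj|) = 2 * (N:ℝ)^2 := by
    rw [hkey, abs_div, abs_mul, abs_of_pos h1mj, abs_mul]
    have h1 : |aj| ≠ 0 := fun h => haj_ne (abs_eq_zero.mp h)
    have hne : (1 - η N j) ≠ 0 := ne_of_gt h1mj
    have e1 : |a0| / ((1 - η N j) * |aj|) * ((1 - η N j) * (|cW N| * |aj|))
        = |cW N| * |a0| := by
      field_simp
    rw [e1, ← abs_mul, hca0, abs_of_pos (by positivity)]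
  have habs_nonneg : 0 ≤ |(derivative (Lagrange.basis univ (η N) j)).eval 1| := abs_nonneg _
  rw [le_div_iff₀ h1mj]
  have hs : 0 ≤ |(derivative (Lagrange.basis univ (η N) j)).eval 1| * (1 - η N j) :=
    mul_nonneg habs_nonneg h1mj.le
  have h5 := mul_le_mul_of_nonneg_left hcaj hs
  nlinarith [h5, hkey2, hNpos, mul_pos hNpos hNpos]

lemma basis_deriv_bound' (hN : 1 ≤ N) (j : Fin (N+1)) (hj : j ≠ 0) :
    |(derivative (Lagrange.basis univ (η N) j)).eval 1| ≤ (N:ℝ)^2 / (j:ℝ)^2 := by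
  have h1 := basis_deriv_bound N hN j hj
  have h2 := one_sub_eta N hN j hj
  have hNpos : (0:ℝ) < N := by exact_mod_cast hN
  have hj1 : (1:ℝ) ≤ (j:ℝ) := by
    have : 1 ≤ (j:ℕ) := Nat.pos_of_ne_zero (fun h => hj (Fin.ext (by simp [h])))
    exact_mod_cast this
  have h1mj : 0 < 1 - η N j := eta_lt_one N hN j hj
  have hd : 2 * (j:ℝ)^2 / (N:ℝ)^2 > 0 := by positivity
  have h3 : 2 / (1 - η N j) ≤ 2 / (2 * (j:ℝ)^2 / (N:ℝ)^2) :=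
    div_le_div_of_nonneg_left (by norm_num) hd h2
  have h4 : 2 / (2 * (j:ℝ)^2 / (N:ℝ)^2) = (N:ℝ)^2/(j:ℝ)^2 := by
    field_simp
  linarith

lemma sum_basis (hN : 1 ≤ N) :
    ∑ i : Fin (N+1), Lagrange.basis univ (η N) i = 1 := by
  have hvs : Set.InjOn (η N) (univ : Finset (Fin (N+1))) :=
    fun a _ b _ h => eta_inj N hN h
  have hdeg : (1 : ℝ[X]).degree < (#(univ : Finset (Fin (N+1))) : ℕ) := by
    rw [Polynomial.degree_one, Finset.card_univ, Fintype.card_fin]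
    exact_mod_cast Nat.succ_pos N
  have := Lagrange.eq_interpolate (f := (1:ℝ[X])) hvs hdeg
  rw [Lagrange.interpolate_apply] at this
  simp only [Polynomial.eval_one, map_one, one_mul] at this
  exact this.symm

lemma sumsq : ∀ n : ℕ, ∑ i ∈ Finset.range (n+1), (1:ℝ)/((i:ℝ)+1)^2 ≤ 2 - 1/((n:ℝ)+1) := by
  intro n
  induction n with
  | zero => norm_num
  | succ n ih =>
    rw [Finset.sum_range_succ]
    have h1 : (0:ℝ) < (n:ℝ)+1 := by positivity
    have h2 : (0:ℝ) < (n:ℝ)+2 := by positivity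
    have key : (1:ℝ)/((n:ℝ)+2)^2 ≤ 1/((n:ℝ)+1) - 1/((n:ℝ)+2) := by
      rw [div_sub_div _ _ (ne_of_gt h1) (ne_of_gt h2)]
      have e1 : 1 * ((n:ℝ)+2) - ((n:ℝ)+1) * 1 = 1 := by ring
      rw [e1]
      apply div_le_div_of_nonneg_left (by norm_num) (by positivity)
      nlinarith
    push_cast
    rw [show ((n:ℝ)+1+1) = (n:ℝ)+2 from by ring]
    linarith

lemma sumsq' : ∀ n : ℕ, ∑ i ∈ Finset.range n, (1:ℝ)/((i:ℝ)+1)^2 ≤ 2 := by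
  intro n
  cases n with
  | zero => simp
  | succ m =>
    have h := sumsq m
    have : (0:ℝ) ≤ 1/((m:ℝ)+1) := by positivity
    linarith

theorem markov (hN : 1 ≤ N) (p : ℝ[X]) (hdeg : p.natDegree ≤ N) (A : ℝ)
    (hb : ∀ x ∈ Set.Icc (-1:ℝ) 1, |p.eval x| ≤ A) :
    |(derivative p).eval 1| ≤ 4 * (N:ℝ)^2 * A := by
  classical
  have hNpos : (0:ℝ) < N := by exact_mod_cast hN
  have hvs : Set.InjOn (η N) (univ : Finset (Fin (N+1))) :=
    fun a _ b _ h => eta_inj N hN h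
  have hpdeg : p.degree < (#(univ : Finset (Fin (N+1))) : ℕ) := by
    rw [Finset.card_univ, Fintype.card_fin]
    calc p.degree ≤ (p.natDegree : WithBot ℕ) := Polynomial.degree_le_natDegree
    _ < ((N+1 : ℕ) : WithBot ℕ) := by exact_mod_cast Nat.lt_succ_of_le hdeg
  have hI := Lagrange.eq_interpolate (f := p) hvs hpdeg
  rw [Lagrange.interpolate_apply] at hI
  -- derivative identity
  set d : Fin (N+1) → ℝ := fun i => (derivative (Lagrange.basis univ (η N) i)).eval 1 with hd
  have hder : (derivative p).eval 1 = ∑ i : Fin (N+1), p.eval (η N i) * d i := by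
    conv_lhs => rw [hI]
    rw [derivative_sum, eval_finset_sum]
    apply Finset.sum_congr rfl
    intro i _
    rw [derivative_C_mul, eval_mul, eval_C]
  -- sum of derivatives is zero
  have hsum0 : ∑ i : Fin (N+1), d i = 0 := by
    have h1 : derivative (∑ i : Fin (N+1), Lagrange.basis univ (η N) i) = 0 := by
      rw [sum_basis N hN]; simp
    rw [derivative_sum] at h1
    have := congrArg (fun q => Polynomial.eval (1:ℝ) q) h1
    simpa [eval_finset_sum] using this
  -- bound |d 0|
  have hd0 : |d 0| ≤ ∑ j ∈ univ.erase (0 : Fin (N+1)), |d j| := by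
    have h1 : d 0 = -∑ j ∈ univ.erase (0 : Fin (N+1)), d j := by
      have := Finset.add_sum_erase univ d (mem_univ (0 : Fin (N+1)))
      rw [hsum0] at this
      linarith
    rw [h1, abs_neg]
    exact Finset.abs_sum_le_sum_abs _ _
  -- each |d j|, j ≠ 0 bounded
  have hdj : ∀ j ∈ univ.erase (0 : Fin (N+1)), |d j| ≤ (N:ℝ)^2/(j:ℝ)^2 := by
    intro j hjmem
    exact basis_deriv_bound' N hN j (Finset.mem_erase.mp hjmem).1
  -- sum bound
  have hsumsq : ∑ j ∈ univ.erase (0 : Fin (N+1)), (N:ℝ)^2/(j:ℝ)^2 ≤ 2 * (N:ℝ)^2 := by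
    set G : ℕ → ℝ := fun m => if m = 0 then 0 else (N:ℝ)^2/(m:ℝ)^2 with hG
    have hstep : ∑ j ∈ univ.erase (0 : Fin (N+1)), (N:ℝ)^2/(j:ℝ)^2
        = ∑ j ∈ univ.erase (0 : Fin (N+1)), G (j:ℕ) := by
      apply Finset.sum_congr rfl
      intro j hjmem
      have hj0 : (j:ℕ) ≠ 0 := by
        intro h
        exact (Finset.mem_erase.mp hjmem).1 (Fin.ext (by simp [h]))
      rw [hG]; simp [hj0]
    rw [hstep]
    have hstep2 : ∑ j ∈ univ.erase (0 : Fin (N+1)), G (j:ℕ)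
        = ∑ j : Fin (N+1), G (j:ℕ) := by
      apply Finset.sum_erase
      simp [hG]
    rw [hstep2, Fin.sum_univ_eq_sum_range (fun i => G i)]
    rw [Finset.sum_range_succ']
    have : ∑ i ∈ Finset.range N, G (i+1) = (N:ℝ)^2 * ∑ i ∈ Finset.range N, 1/((i:ℝ)+1)^2 := by
      rw [Finset.mul_sum]
      apply Finset.sum_congr rfl
      intro i _
      rw [hG]; simp
      push_cast
      ring
    rw [this]
    have hs := sumsq' N
    have hG0 : G 0 = 0 := by simp [hG]
    rw [hG0, add_zero]
    nlinarith [mul_le_mul_of_nonneg_left hs (sq_nonneg (N:ℝ))]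
  have hA : 0 ≤ A := le_trans (abs_nonneg _) (hb 1 (by norm_num))
  rw [hder]
  calc |∑ i : Fin (N+1), p.eval (η N i) * d i|
      ≤ ∑ i : Fin (N+1), |p.eval (η N i) * d i| := Finset.abs_sum_le_sum_abs _ _
    _ ≤ ∑ i : Fin (N+1), A * |d i| := by
        apply Finset.sum_le_sum
        intro i _
        rw [abs_mul]
        apply mul_le_mul_of_nonneg_right _ (abs_nonneg _)
        apply hb
        constructor
        · exact Real.neg_one_le_cos _
        · exact Real.cos_le_one _
    _ = A * ∑ i : Fin (N+1), |d i| := by rw [Finset.mul_sum]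
    _ ≤ A * (4 * (N:ℝ)^2) := by
        apply mul_le_mul_of_nonneg_left _ hA
        have h1 : ∑ i : Fin (N+1), |d i| = |d 0| + ∑ j ∈ univ.erase (0:Fin (N+1)), |d j| :=
          (Finset.add_sum_erase univ (fun i => |d i|) (mem_univ _)).symm
        have h2 : ∑ j ∈ univ.erase (0:Fin (N+1)), |d j|
            ≤ ∑ j ∈ univ.erase (0:Fin (N+1)), (N:ℝ)^2/(j:ℝ)^2 := Finset.sum_le_sum hdj
        linarith
    _ = 4 * (N:ℝ)^2 * A := by ring

end MyMarkov

namespace MyMarkov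

lemma markov_scaled (N : ℕ) (hN : 1 ≤ N) (q : ℝ[X]) (hdeg : q.natDegree ≤ N) (B : ℝ)
    (hb : ∀ t ∈ Set.Icc (0:ℝ) (1/2), |q.eval t| ≤ B) :
    |(derivative q).eval 0| ≤ 16 * (N:ℝ)^2 * B := by
  set u : ℝ[X] := C (4⁻¹:ℝ) * (1 - X) with hu
  set r : ℝ[X] := q.comp u with hr
  have hudeg : u.natDegree ≤ 1 := by
    refine le_trans (natDegree_C_mul_le _ _) ?_
    refine le_trans (natDegree_sub_le _ _) ?_
    simp
  have hrdeg : r.natDegree ≤ N := by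
    refine le_trans (natDegree_comp_le) ?_
    calc q.natDegree * u.natDegree ≤ N * 1 := Nat.mul_le_mul hdeg hudeg
    _ = N := by ring
  have hueval : ∀ x : ℝ, u.eval x = (1 - x)/4 := by
    intro x; rw [hu]; simp; ring
  have hrb : ∀ x ∈ Set.Icc (-1:ℝ) 1, |r.eval x| ≤ B := by
    intro x hx
    rw [hr, eval_comp, hueval]
    apply hb
    rcases hx with ⟨hx1, hx2⟩
    constructor <;> [linarith; linarith]
  have hmain := markov N hN r hrdeg B hrb
  have hder : (derivative r).eval 1 = -(4⁻¹) * (derivative q).eval 0 := by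
    rw [hr, derivative_comp, eval_mul, eval_comp, hueval]
    have hdu : derivative u = C (-(4⁻¹):ℝ) := by
      rw [hu]
      rw [derivative_C_mul]
      simp only [derivative_sub, derivative_one, derivative_X, zero_sub]
      rw [show (C (4⁻¹:ℝ)) * -1 = C (-(4⁻¹):ℝ) by rw [mul_neg_one, ← C_neg]]
    rw [hdu, eval_C]
    norm_num
  rw [hder] at hmain
  rw [abs_mul, abs_neg] at hmain
  have h4 : |(4⁻¹:ℝ)| = 4⁻¹ := by norm_num
  rw [h4] at hmain
  nlinarith [hmain]

end MyMarkov

set_option maxHeartbeats 2000000 in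
open MyMarkov in
/-- Main technical lemma: a power series `p(t) = ∑_{i≥1} c_i t^i` with `c_1 = 1` and
coefficient length at most `M ≥ 3/2` satisfies `sup_{t ∈ [0,1]} |p(t)| ≥ c / (log M)^2`
for a universal constant `c > 0`. -/
theorem stmt0 :
    ∃ c : ℝ, 0 < c ∧
      ∀ (M : ℝ) (a : ℕ → ℂ), (3:ℝ)/2 ≤ M → a 0 = 0 → a 1 = 1 →
        Summable (fun i => ‖a i‖) → (∑' i, ‖a i‖) ≤ M →
        c / (Real.log M)^2 ≤ ⨆ t : Set.Icc (0:ℝ) 1, ‖∑' i, a i * ((t : ℝ) : ℂ)^i‖ := by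
  use 1/4608
  refine ⟨by norm_num, ?_⟩
  intro M a hM h0 h1 hsum hsumle
  set S : ℝ := ⨆ t : Set.Icc (0:ℝ) 1, ‖∑' i, a i * ((t : ℝ) : ℂ)^i‖ with hSdef
  have hMpos : (0:ℝ) < M := by linarith
  have hterm : ∀ t : ℝ, t ∈ Set.Icc (0:ℝ) 1 → ∀ i, ‖a i * ((t:ℝ):ℂ)^i‖ ≤ ‖a i‖ := by
    intro t ht i
    rw [norm_mul, norm_pow, Complex.norm_real, Real.norm_eq_abs]
    have h2 : |t| ≤ 1 := abs_le.mpr ⟨by linarith [ht.1], ht.2⟩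
    have h3 : |t|^i ≤ 1 := pow_le_one₀ (abs_nonneg t) h2
    calc ‖a i‖ * |t|^i ≤ ‖a i‖ * 1 := by
          exact mul_le_mul_of_nonneg_left h3 (norm_nonneg _)
    _ = ‖a i‖ := mul_one _
  have hsummable : ∀ t : ℝ, t ∈ Set.Icc (0:ℝ) 1 → Summable (fun i => a i * ((t:ℝ):ℂ)^i) :=
    fun t ht => Summable.of_norm_bounded hsum (hterm t ht)
  have hsummableN : ∀ t : ℝ, t ∈ Set.Icc (0:ℝ) 1 → Summable (fun i => ‖a i * ((t:ℝ):ℂ)^i‖) :=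
    fun t ht => Summable.of_nonneg_of_le (fun i => norm_nonneg _) (hterm t ht) hsum
  have hFle : ∀ t : Set.Icc (0:ℝ) 1, ‖∑' i, a i * ((t:ℝ):ℂ)^i‖ ≤ M := by
    intro t
    calc ‖∑' i, a i * ((t:ℝ):ℂ)^i‖ ≤ ∑' i, ‖a i * ((t:ℝ):ℂ)^i‖ :=
          norm_tsum_le_tsum_norm (hsummableN t t.2)
    _ ≤ ∑' i, ‖a i‖ := Summable.tsum_le_tsum (hterm t t.2) (hsummableN t t.2) hsum
    _ ≤ M := hsumle
  have hBdd : BddAbove (Set.range (fun t : Set.Icc (0:ℝ) 1 => ‖∑' i, a i * ((t:ℝ):ℂ)^i‖)) :=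
    ⟨M, by rintro x ⟨t, rfl⟩; exact hFle t⟩
  have hSle : ∀ t : Set.Icc (0:ℝ) 1, ‖∑' i, a i * ((t:ℝ):ℂ)^i‖ ≤ S :=
    fun t => le_ciSup hBdd t
  have hSM : S ≤ M := ciSup_le hFle
  -- Lower bound S ≥ 1/(4M)
  have hS4 : 1/(4*M) ≤ S := by
    set t₀ : ℝ := 1/(2*M) with ht₀def
    have ht₀pos : 0 < t₀ := by positivity
    have ht₀le : t₀ ≤ 1 := by
      rw [ht₀def, div_le_one (by linarith)]; linarith
    have ht₀mem : t₀ ∈ Set.Icc (0:ℝ) 1 := ⟨le_of_lt ht₀pos, ht₀le⟩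
    set f : ℕ → ℂ := fun i => a i * ((t₀:ℝ):ℂ)^i with hfdef
    have hfs : Summable f := hsummable t₀ ht₀mem
    have hfs1 : Summable (fun i => f (i+1)) := (summable_nat_add_iff 1).mpr hfs
    have e1 : ∑' i, f i = f 0 + ∑' i, f (i+1) := Summable.tsum_eq_zero_add hfs
    have e2 : ∑' i, f (i+1) = f 1 + ∑' i, f (i+2) := Summable.tsum_eq_zero_add hfs1
    have hf0 : f 0 = 0 := by rw [hfdef]; simp [h0]
    have hf1 : f 1 = ((t₀:ℝ):ℂ) := by rw [hfdef]; simp [h1]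
    have htail : ‖∑' i, f (i+2)‖ ≤ M * t₀^2 := by
      have hsN2 : Summable (fun i => ‖a (i+2)‖) := (summable_nat_add_iff 2).mpr hsum
      have hb2 : ∀ i, ‖f (i+2)‖ ≤ ‖a (i+2)‖ * t₀^2 := by
        intro i
        rw [hfdef]
        simp only []
        rw [norm_mul, norm_pow, Complex.norm_real, Real.norm_eq_abs, abs_of_pos ht₀pos]
        have h5 : t₀^(i+2) ≤ t₀^2 :=
          pow_le_pow_of_le_one (le_of_lt ht₀pos) ht₀le (by omega)
        exact mul_le_mul_of_nonneg_left h5 (norm_nonneg _)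
      have hsf2 : Summable (fun i => ‖f (i+2)‖) :=
        ((summable_nat_add_iff 2).mpr (hsummableN t₀ ht₀mem) : _)
      calc ‖∑' i, f (i+2)‖ ≤ ∑' i, ‖f (i+2)‖ := norm_tsum_le_tsum_norm hsf2
      _ ≤ ∑' i, ‖a (i+2)‖ * t₀^2 := Summable.tsum_le_tsum hb2 hsf2 (hsN2.mul_right _)
      _ = (∑' i, ‖a (i+2)‖) * t₀^2 := tsum_mul_right
      _ ≤ M * t₀^2 := by
          apply mul_le_mul_of_nonneg_right _ (by positivity)
          have hsplit := Summable.sum_add_tsum_nat_add 2 hsum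
          have hpos : 0 ≤ ∑ i ∈ Finset.range 2, ‖a i‖ :=
            Finset.sum_nonneg (fun i _ => norm_nonneg _)
          linarith
    have hlow : t₀ - M * t₀^2 ≤ ‖∑' i, f i‖ := by
      rw [e1, e2, hf0, hf1, zero_add]
      have h6 : ‖((t₀:ℝ):ℂ)‖ ≤ ‖((t₀:ℝ):ℂ) + ∑' i, f (i+2)‖ + ‖∑' i, f (i+2)‖ := by
        have h7 := norm_sub_le (((t₀:ℝ):ℂ) + ∑' i, f (i+2)) (∑' i, f (i+2))
        have e : ((t₀:ℝ):ℂ) + (∑' i, f (i+2)) - (∑' i, f (i+2)) = ((t₀:ℝ):ℂ) := by ring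
        rw [e] at h7
        exact h7
      rw [Complex.norm_real, Real.norm_eq_abs, abs_of_pos ht₀pos] at h6
      linarith
    have hval : t₀ - M * t₀^2 = 1/(4*M) := by
      rw [ht₀def]; field_simp; ring
    have := hSle ⟨t₀, ht₀mem⟩
    simp only [] at this
    calc 1/(4*M) = t₀ - M * t₀^2 := hval.symm
    _ ≤ ‖∑' i, f i‖ := hlow
    _ ≤ S := this
  have hSpos : 0 < S := lt_of_lt_of_le (by positivity) hS4
  -- choice of N
  set L : ℝ := Real.logb 2 (M/S) with hLdef
  have hMS1 : 1 ≤ M/S := (one_le_div hSpos).mpr hSM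
  have hL0 : 0 ≤ L := Real.logb_nonneg (by norm_num) hMS1
  set N : ℕ := ⌊L⌋₊ + 1 with hNdef
  have hN1 : 1 ≤ N := Nat.le_add_left 1 ⌊L⌋₊
  have hMS : M/S < 2^(N:ℕ) := by
    have hlt : L < (N:ℝ) := by
      rw [hNdef]; push_cast; exact Nat.lt_floor_add_one L
    calc M/S = (2:ℝ) ^ L := (Real.rpow_logb (by norm_num) (by norm_num) (by positivity)).symm
    _ < (2:ℝ) ^ ((N:ℕ):ℝ) := (Real.rpow_lt_rpow_left_iff (by norm_num)).mpr hlt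
    _ = 2^(N:ℕ) := Real.rpow_natCast 2 N
  have htailS : M * (1/2)^(N+1) ≤ S := by
    rw [div_lt_iff₀ hSpos] at hMS
    have h2N : (0:ℝ) < 2^N := by positivity
    have he : M * (1/2:ℝ)^(N+1) = M / (2 * 2^N) := by
      rw [div_pow, one_pow, pow_succ]
      ring
    rw [he, div_le_iff₀ (by positivity)]
    nlinarith
  -- the truncated polynomial
  set q : Polynomial ℝ := ∑ i ∈ Finset.range (N+1), Polynomial.C ((a i).re) * Polynomial.X^i
    with hqdef
  have hqdeg : q.natDegree ≤ N := by
    apply Polynomial.natDegree_sum_le_of_forall_le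
    intro i hi
    refine le_trans (Polynomial.natDegree_C_mul_le _ _) ?_
    rw [Polynomial.natDegree_X_pow]
    exact Nat.lt_succ_iff.mp (Finset.mem_range.mp hi)
  have hq0 : (Polynomial.derivative q).eval 0 = 1 := by
    rw [← Polynomial.coeff_zero_eq_eval_zero, Polynomial.coeff_derivative]
    have hc1 : q.coeff 1 = (a 1).re := by
      rw [hqdef, Polynomial.finset_sum_coeff]
      rw [Finset.sum_eq_single 1]
      · simp
      · intro b _ hb
        simp [Polynomial.coeff_C_mul, Polynomial.coeff_X_pow, Ne.symm hb]
      · intro h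
        exact absurd (Finset.mem_range.mpr (by omega)) h
    rw [hc1, h1]
    norm_num
  have hqb : ∀ x ∈ Set.Icc (0:ℝ) (1/2), |q.eval x| ≤ 2 * S := by
    intro x hx
    have hx01 : x ∈ Set.Icc (0:ℝ) 1 := ⟨hx.1, by linarith [hx.2]⟩
    have hqx : q.eval x = (∑ i ∈ Finset.range (N+1), a i * ((x:ℝ):ℂ)^i).re := by
      rw [hqdef, Polynomial.eval_finset_sum, Complex.re_sum]
      apply Finset.sum_congr rfl
      intro i _
      rw [Polynomial.eval_mul, Polynomial.eval_C, Polynomial.eval_pow, Polynomial.eval_X,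
        show ((x:ℂ))^i = (((x^i:ℝ)):ℂ) from (Complex.ofReal_pow x i).symm]
      rw [Complex.mul_re, Complex.ofReal_re, Complex.ofReal_im]
      ring
    have habs : |q.eval x| ≤ ‖∑ i ∈ Finset.range (N+1), a i * ((x:ℝ):ℂ)^i‖ := by
      rw [hqx]
      exact Complex.abs_re_le_norm _
    have hsplit := Summable.sum_add_tsum_nat_add (N+1) (hsummable x hx01)
    have htail2 : ‖∑' i, a (i+(N+1)) * ((x:ℝ):ℂ)^(i+(N+1))‖ ≤ M * (1/2)^(N+1) := by
      have hsN2 : Summable (fun i => ‖a (i+(N+1))‖) := (summable_nat_add_iff (N+1)).mpr hsum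
      have hb2 : ∀ i, ‖a (i+(N+1)) * ((x:ℝ):ℂ)^(i+(N+1))‖ ≤ ‖a (i+(N+1))‖ * (1/2)^(N+1) := by
        intro i
        rw [norm_mul, norm_pow, Complex.norm_real, Real.norm_eq_abs]
        have hxa : |x| = x := abs_of_nonneg hx.1
        have h5 : |x|^(i+(N+1)) ≤ |x|^(N+1) :=
          pow_le_pow_of_le_one (abs_nonneg x) (by rw [hxa]; linarith [hx.2]) (by omega)
        have h6 : |x|^(N+1) ≤ (1/2:ℝ)^(N+1) :=
          pow_le_pow_left₀ (abs_nonneg x) (by rw [hxa]; linarith [hx.2]) _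
        have := le_trans h5 h6
        exact mul_le_mul_of_nonneg_left this (norm_nonneg _)
      have hsf2 : Summable (fun i => ‖a (i+(N+1)) * ((x:ℝ):ℂ)^(i+(N+1))‖) :=
        (summable_nat_add_iff (N+1)).mpr (hsummableN x hx01)
      calc ‖∑' i, a (i+(N+1)) * ((x:ℝ):ℂ)^(i+(N+1))‖
          ≤ ∑' i, ‖a (i+(N+1)) * ((x:ℝ):ℂ)^(i+(N+1))‖ := norm_tsum_le_tsum_norm hsf2
      _ ≤ ∑' i, ‖a (i+(N+1))‖ * (1/2)^(N+1) := Summable.tsum_le_tsum hb2 hsf2 (hsN2.mul_right _)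
      _ = (∑' i, ‖a (i+(N+1))‖) * (1/2)^(N+1) := tsum_mul_right
      _ ≤ M * (1/2)^(N+1) := by
          apply mul_le_mul_of_nonneg_right _ (by positivity)
          have hsplit2 := Summable.sum_add_tsum_nat_add (N+1) hsum
          have hpos : 0 ≤ ∑ i ∈ Finset.range (N+1), ‖a i‖ :=
            Finset.sum_nonneg (fun i _ => norm_nonneg _)
          linarith
    have hfull : ‖∑' i, a i * ((x:ℝ):ℂ)^i‖ ≤ S := hSle ⟨x, hx01⟩
    have hpartial : (∑ i ∈ Finset.range (N+1), a i * ((x:ℝ):ℂ)^i)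
        = (∑' i, a i * ((x:ℝ):ℂ)^i) - ∑' i, a (i+(N+1)) * ((x:ℝ):ℂ)^(i+(N+1)) := by
      rw [← hsplit]; ring
    calc |q.eval x| ≤ ‖∑ i ∈ Finset.range (N+1), a i * ((x:ℝ):ℂ)^i‖ := habs
    _ ≤ ‖∑' i, a i * ((x:ℝ):ℂ)^i‖ + ‖∑' i, a (i+(N+1)) * ((x:ℝ):ℂ)^(i+(N+1))‖ := by
        rw [hpartial]; exact norm_sub_le _ _
    _ ≤ S + M * (1/2)^(N+1) := add_le_add hfull htail2
    _ ≤ 2 * S := by linarith [htailS]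
  -- apply Markov
  have hmarkov := markov_scaled N hN1 q hqdeg (2*S) hqb
  rw [hq0] at hmarkov
  have hkey : 1 ≤ 32 * (N:ℝ)^2 * S := by
    rw [abs_one] at hmarkov
    nlinarith [hmarkov]
  -- numerical bound on N
  have hlogM : (1:ℝ)/3 ≤ Real.log M := by
    have h23 : Real.log (2/3 : ℝ) ≤ 2/3 - 1 := Real.log_le_sub_one_of_pos (by norm_num)
    have hinv : Real.log ((3:ℝ)/2) = - Real.log (2/3 : ℝ) := by
      rw [← Real.log_inv]
      norm_num
    have hmono : Real.log ((3:ℝ)/2) ≤ Real.log M :=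
      Real.log_le_log (by norm_num) hM
    rw [hinv] at hmono
    linarith
  have hlogMpos : 0 < Real.log M := lt_of_lt_of_le (by norm_num) hlogM
  have hl2a : (0.6931471803 : ℝ) < Real.log 2 := Real.log_two_gt_d9
  have hl2b : Real.log 2 < 0.6931471808 := Real.log_two_lt_d9
  have hNbound : (N:ℝ) ≤ 12 * Real.log M := by
    have hNle : (N:ℝ) ≤ L + 1 := by
      rw [hNdef]; push_cast
      linarith [Nat.floor_le hL0]
    have hMS4 : M/S ≤ 4*M^2 := by
      have e : (4*M^2) * (1/(4*M)) = M := by field_simp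
      have h7 := mul_le_mul_of_nonneg_left hS4 (by positivity : (0:ℝ) ≤ 4*M^2)
      rw [e] at h7
      rw [div_le_iff₀ hSpos]
      linarith
    have hl2pos : (0:ℝ) < Real.log 2 := by linarith
    have hLle : L ≤ (2*Real.log 2 + 2*Real.log M) / Real.log 2 := by
      rw [hLdef, Real.logb]
      have hlog_le : Real.log (M/S) ≤ Real.log (4*M^2) :=
        Real.log_le_log (by positivity) hMS4
      have hexp : Real.log (4*M^2) = 2*Real.log 2 + 2*Real.log M := by
        rw [Real.log_mul (by norm_num) (by positivity), Real.log_pow,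
          show (4:ℝ) = 2^2 by norm_num, Real.log_pow]
        push_cast
        ring
      rw [← hexp]
      gcongr
    have hstep : (2*Real.log 2 + 2*Real.log M)/Real.log 2 + 1 ≤ 12*Real.log M := by
      rw [div_add' _ _ _ (ne_of_gt hl2pos), div_le_iff₀ hl2pos]
      have hp : (1/3:ℝ)*(12*Real.log 2 - 2) ≤ Real.log M * (12*Real.log 2 - 2) :=
        mul_le_mul_of_nonneg_right hlogM (by nlinarith [hl2a])
      nlinarith [hp, hl2a, hl2b]
    linarith
  -- conclude
  have hfinal : 1 ≤ 4608 * (Real.log M)^2 * S := by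
    have hN0 : (0:ℝ) ≤ (N:ℝ) := Nat.cast_nonneg N
    have hsq : (N:ℝ)*(N:ℝ) ≤ (12*Real.log M)*(12*Real.log M) :=
      mul_self_le_mul_self hN0 hNbound
    have h8 := mul_le_mul_of_nonneg_right hsq hSpos.le
    nlinarith [hkey, h8]
  rw [div_le_iff₀ (by positivity : (0:ℝ) < (Real.log M)^2)]
  nlinarith [hfinal]
end
end

section
/- Let \Omega = \{0,1,\dots,m-1\} with a full-support probability measure \pi, and let f, g : \Omega^n \to \R be monotone functions. Then \rho \mapsto E_{x \sim \pi^{\otimes n}}[T_\rho f(x) \cdot g(x)] is a nondecreasing function of \rho on [0,1]. -/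
/-!
Induct on the number of coordinates. Splitting off the first coordinate writes the correlation
as `∑ a b, w a * K_ρ a b * H_ρ a b`, where `K_ρ` is the one-coordinate noise kernel and
`H_ρ a b` is the correlation, one dimension lower, of `f (b, ·)` and `g (a, ·)`. By induction
`H_ρ` grows with `ρ`, and `K_ρ ≥ 0`, so `ρ` may first be raised inside `H`. What remains is
affine in `ρ` with slope `∑ w a H a a - ∑ w a w b H a b`, half of
`∑ w a w b (H a a + H b b - H a b - H b a)`. By bilinearity, for `b ≤ a` the bracket is the
correlation of the nonnegative functions `f (a, ·) - f (b, ·)` and `g (a, ·) - g (b, ·)`.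
-/

open Finset

lemma sum_sum_mul_le_sum_diag {α : Type*} [Fintype α] {w : α → ℝ} (hw : ∀ a, 0 ≤ w a)
    (hsum : ∑ a, w a = 1) {H : α → α → ℝ} (hH : ∀ a b, H a b + H b a ≤ H a a + H b b) :
    ∑ a, ∑ b, w a * w b * H a b ≤ ∑ a, w a * H a a := by
  have hdiag : ∑ a, ∑ b, w a * w b * H a a = ∑ a, w a * H a a := by
    simp only [mul_right_comm _ _ (H _ _), ← mul_sum, hsum, mul_one]
  have hdiag' : ∑ a, ∑ b, w a * w b * H b b = ∑ a, w a * H a a := by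
    rw [sum_comm, ← hdiag]
    simp only [mul_comm (w _) (w _)]
  have hswap : ∑ a, ∑ b, w a * w b * H b a = ∑ a, ∑ b, w a * w b * H a b := by
    rw [sum_comm]
    simp only [mul_comm (w _) (w _)]
  have hgap : 0 ≤ ∑ a, ∑ b, w a * w b * (H a a + H b b - H a b - H b a) :=
    sum_nonneg fun a _ => sum_nonneg fun b _ =>
      mul_nonneg (mul_nonneg (hw a) (hw b)) (by linarith [hH a b])
  simp only [mul_sub, mul_add, sum_sub_distrib, sum_add_distrib] at hgap
  linarith

lemma Monotone.comp_fin_cons {α β : Type*} [Preorder α] [Preorder β] {n : ℕ}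
    {f : (Fin (n + 1) → α) → β} (hf : Monotone f) (a : α) :
    Monotone fun x : Fin n → α => f (Fin.cons a x) :=
  fun _ _ h => hf (Fin.cons_le_cons.2 ⟨le_rfl, h⟩)

section NoisyCorrelation

variable {α : Type*} [DecidableEq α]

def noiseKernel (w : α → ℝ) (ρ : ℝ) (a b : α) : ℝ :=
  ρ * (if b = a then 1 else 0) + (1 - ρ) * w b

lemma noiseKernel_nonneg {w : α → ℝ} (hw : ∀ a, 0 ≤ w a) {ρ : ℝ} (hρ : ρ ∈ Set.Icc (0 : ℝ) 1)
    (a b : α) : 0 ≤ noiseKernel w ρ a b :=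
  add_nonneg (mul_nonneg hρ.1 (by split_ifs <;> norm_num)) (mul_nonneg (sub_nonneg.2 hρ.2) (hw b))

lemma sum_noiseKernel_mul_eq [Fintype α] (w : α → ℝ) (ρ : ℝ) (H : α → α → ℝ) :
    ∑ a, ∑ b, w a * noiseKernel w ρ a b * H a b =
      ∑ a, ∑ b, w a * w b * H a b + ρ * (∑ a, w a * H a a - ∑ a, ∑ b, w a * w b * H a b) := by
  have hrow (a : α) : ∑ b, w a * noiseKernel w ρ a b * H a b =
      ρ * (w a * H a a) + (1 - ρ) * ∑ b, w a * w b * H a b := by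
    simp only [noiseKernel, mul_add, add_mul, sum_add_distrib, mul_ite, ite_mul, mul_one,
      mul_zero, zero_mul, sum_ite_eq', mem_univ, if_true, mul_sum]
    congr 1
    · ring
    · exact sum_congr rfl fun b _ => by ring
  simp only [hrow, sum_add_distrib, ← mul_sum]
  ring

lemma sum_noiseKernel_mul_mono [Fintype α] {w : α → ℝ} (hw : ∀ a, 0 ≤ w a)
    (hsum : ∑ a, w a = 1) {H : α → α → ℝ} (hH : ∀ a b, H a b + H b a ≤ H a a + H b b)
    {ρ ρ' : ℝ} (hρ : ρ ≤ ρ') :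
    ∑ a, ∑ b, w a * noiseKernel w ρ a b * H a b ≤
      ∑ a, ∑ b, w a * noiseKernel w ρ' a b * H a b := by
  rw [sum_noiseKernel_mul_eq, sum_noiseKernel_mul_eq]
  gcongr
  exact sub_nonneg.2 (sum_sum_mul_le_sum_diag hw hsum hH)

variable [Fintype α]

/-- `E_{x ∼ π^⊗n}[T_ρ f(x) g(x)]` for `π = w`. -/
def noisyCorrelation {n : ℕ} (w : α → ℝ) (ρ : ℝ) (f g : (Fin n → α) → ℝ) : ℝ :=
  ∑ x : Fin n → α, ∑ y : Fin n → α,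
    (∏ i, w (x i)) * ((∏ i, noiseKernel w ρ (x i) (y i)) * (f y * g x))

lemma noisyCorrelation_nonneg {n : ℕ} {w : α → ℝ} (hw : ∀ a, 0 ≤ w a) {ρ : ℝ}
    (hρ : ρ ∈ Set.Icc (0 : ℝ) 1) {f g : (Fin n → α) → ℝ} (hf : 0 ≤ f) (hg : 0 ≤ g) :
    0 ≤ noisyCorrelation w ρ f g :=
  sum_nonneg fun x _ => sum_nonneg fun y _ =>
    mul_nonneg (prod_nonneg fun _ _ => hw _) <|
      mul_nonneg (prod_nonneg fun _ _ => noiseKernel_nonneg hw hρ _ _) (mul_nonneg (hf y) (hg x))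

lemma noisyCorrelation_sub_sub {n : ℕ} (w : α → ℝ) (ρ : ℝ) (f₁ f₂ g₁ g₂ : (Fin n → α) → ℝ) :
    noisyCorrelation w ρ (f₁ - f₂) (g₁ - g₂) =
      noisyCorrelation w ρ f₁ g₁ + noisyCorrelation w ρ f₂ g₂ -
        noisyCorrelation w ρ f₁ g₂ - noisyCorrelation w ρ f₂ g₁ := by
  simp only [noisyCorrelation, ← sum_add_distrib, ← sum_sub_distrib, Pi.sub_apply]
  refine sum_congr rfl fun x _ => sum_congr rfl fun y _ => ?_
  ring

lemma noisyCorrelation_zero (w : α → ℝ) (ρ : ℝ) (f g : (Fin 0 → α) → ℝ) :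
    noisyCorrelation w ρ f g = f finZeroElim * g finZeroElim := by
  simp only [noisyCorrelation, Fintype.sum_unique, Fin.prod_univ_zero, one_mul]
  rfl

lemma noisyCorrelation_succ {n : ℕ} (w : α → ℝ) (ρ : ℝ) (f g : (Fin (n + 1) → α) → ℝ) :
    noisyCorrelation w ρ f g = ∑ a, ∑ b, w a * noiseKernel w ρ a b *
      noisyCorrelation w ρ (fun y => f (Fin.cons b y)) (fun x => g (Fin.cons a x)) := by
  simp only [noisyCorrelation, ← (Fin.consEquiv fun _ => α).sum_comp, Fintype.sum_prod_type,
    Fin.consEquiv_apply, Fin.prod_univ_succ, Fin.cons_zero, Fin.cons_succ, mul_sum]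
  rw [sum_congr rfl fun a _ => sum_comm]
  refine sum_congr rfl fun a _ => sum_congr rfl fun b _ => sum_congr rfl fun x _ =>
    sum_congr rfl fun y _ => ?_
  -- `Fin.consEquiv_apply` does not fire inside the arguments of `f` and `g`
  change _ * (_ * (f (Fin.cons b y) * g (Fin.cons a x))) = _
  ring

lemma noisyCorrelation_cons_supermodular {α : Type*} [Fintype α] [LinearOrder α] {n : ℕ}
    {w : α → ℝ} (hw : ∀ a, 0 ≤ w a) {ρ : ℝ} (hρ : ρ ∈ Set.Icc (0 : ℝ) 1)
    {f g : (Fin (n + 1) → α) → ℝ} (hf : Monotone f) (hg : Monotone g) (a b : α) :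
    noisyCorrelation w ρ (fun y => f (Fin.cons b y)) (fun x => g (Fin.cons a x)) +
        noisyCorrelation w ρ (fun y => f (Fin.cons a y)) (fun x => g (Fin.cons b x)) ≤
      noisyCorrelation w ρ (fun y => f (Fin.cons a y)) (fun x => g (Fin.cons a x)) +
        noisyCorrelation w ρ (fun y => f (Fin.cons b y)) (fun x => g (Fin.cons b x)) := by
  wlog hba : b ≤ a generalizing a b
  · linarith [this b a (le_of_not_ge hba)]
  have hcons (y : Fin n → α) : (Fin.cons b y : Fin (n + 1) → α) ≤ Fin.cons a y :=
    Fin.cons_le_cons.2 ⟨hba, le_rfl⟩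
  have hgap := noisyCorrelation_nonneg hw hρ
    (f := fun y => f (Fin.cons a y) - f (Fin.cons b y))
    (g := fun x => g (Fin.cons a x) - g (Fin.cons b x))
    (fun y => sub_nonneg.2 (hf (hcons y))) (fun x => sub_nonneg.2 (hg (hcons x)))
  rw [← Pi.sub_def, ← Pi.sub_def, noisyCorrelation_sub_sub] at hgap
  linarith

end NoisyCorrelation

theorem noisyCorrelation_monotoneOn {α : Type*} [Fintype α] [LinearOrder α] {w : α → ℝ}
    (hw : ∀ a, 0 ≤ w a) (hsum : ∑ a, w a = 1) {n : ℕ} {f g : (Fin n → α) → ℝ}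
    (hf : Monotone f) (hg : Monotone g) :
    MonotoneOn (fun ρ => noisyCorrelation w ρ f g) (Set.Icc 0 1) := by
  induction n with
  | zero =>
    intro ρ _ ρ' _ _
    simp only [noisyCorrelation_zero, le_refl]
  | succ n ih =>
    intro ρ hρ ρ' hρ' hle
    calc noisyCorrelation w ρ f g
        = ∑ a, ∑ b, w a * noiseKernel w ρ a b * noisyCorrelation w ρ
            (fun y => f (Fin.cons b y)) (fun x => g (Fin.cons a x)) :=
          noisyCorrelation_succ w ρ f g
      _ ≤ ∑ a, ∑ b, w a * noiseKernel w ρ a b * noisyCorrelation w ρ'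
            (fun y => f (Fin.cons b y)) (fun x => g (Fin.cons a x)) :=
          sum_le_sum fun a _ => sum_le_sum fun b _ =>
            mul_le_mul_of_nonneg_left (ih (hf.comp_fin_cons b) (hg.comp_fin_cons a) hρ hρ' hle)
              (mul_nonneg (hw a) (noiseKernel_nonneg hw hρ a b))
      _ ≤ ∑ a, ∑ b, w a * noiseKernel w ρ' a b * noisyCorrelation w ρ'
            (fun y => f (Fin.cons b y)) (fun x => g (Fin.cons a x)) :=
          sum_noiseKernel_mul_mono hw hsum (noisyCorrelation_cons_supermodular hw hρ' hf hg) hle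
      _ = noisyCorrelation w ρ' f g := (noisyCorrelation_succ w ρ' f g).symm

/-- For monotone `f, g : {0,…,m-1}^n → ℝ`, the noisy correlation
`ρ ↦ E_{x ~ π^⊗n}[T_ρ f(x) · g(x)]` is nondecreasing on `[0,1]`, where `T_ρ` is the
replacement noise operator with respect to the full-support measure `π`. -/
theorem stmt3 (m n : ℕ) (w : Fin m → ℝ) (hw : ∀ a, 0 < w a) (hsum : ∑ a, w a = 1)
    (f g : (Fin n → Fin m) → ℝ) (hf : Monotone f) (hg : Monotone g) :
    MonotoneOn (fun ρ => ∑ x : Fin n → Fin m, ∑ y : Fin n → Fin m,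
        (∏ i, w (x i)) *
          ((∏ i, (ρ * (if y i = x i then (1:ℝ) else 0) + (1 - ρ) * w (y i))) * (f y * g x)))
      (Set.Icc (0:ℝ) 1) :=
  noisyCorrelation_monotoneOn (fun a => (hw a).le) hsum hf hg
end

section
/- Let \Omega = \{0,1,\dots,m-1\} with full-support measure \pi, and let f, g : \Omega^n \to \R be monotone functions. Define f_i(x) = E_{y \sim \pi^{\otimes(n-1)}}[f(y_1,\dots,y_{i-1}, x, y_{i+1},\dots,y_n)] for x \in \Omega, and similarly g_i. Then \sum_{i=1}^n (E[f_i g_i] - E[f_i] E[g_i]) = 0 if and only if there is a partition [n] = S \sqcup \bar{S} such that f depends only on coordinates in S and g depends only on coordinates in \bar{S}. -/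
/-!
The `i`-th summand is the covariance of `f_i` and `g_i` under `π`. By the symmetrisation
`2 Cov(F, G) = ∑_{a,b} π(a) π(b) (F a - F b) (G a - G b)`, the covariance of two monotone
functions is a sum of nonnegative terms, so it vanishes iff for all `a, b` either `F a = F b` or
`G a = G b`, i.e. iff `F` or `G` is constant. Hence the sum vanishes iff for every `i` one of
`f_i`, `g_i` is constant. A monotone `f` has constant `f_i` iff it does not depend on coordinate
`i`, since `f_i b - f_i a` averages the nonnegative increments `f(y[i ↦ b]) - f(y[i ↦ a])`
against a full-support measure. Take `S` to be the set of coordinates on which `f` depends.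
-/

/-- The one-variable average of `f` along coordinate `i`: `f_i(a) = E_y[f(y with y_i := a)]`,
the expectation taken with respect to the product measure with weights `w`. -/
noncomputable def avg1 (m n : ℕ) (w : Fin m → ℝ) (f : (Fin n → Fin m) → ℝ)
    (i : Fin n) (a : Fin m) : ℝ :=
  ∑ y : Fin n → Fin m, (∏ j, w (y j)) * f (Function.update y i a)

open Function

theorem forall_eq_or_forall_eq_of_forall_eq_or_eq {α β γ : Type*} {F : α → β} {G : α → γ}
    (h : ∀ a b, F a = F b ∨ G a = G b) : (∀ a b, F a = F b) ∨ ∀ a b, G a = G b := by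
  by_contra! hc
  obtain ⟨⟨a, b, hab⟩, c, d, hcd⟩ := hc
  have hGab : G a = G b := (h a b).resolve_left hab
  have hG : ∀ x, G x = G a := fun x => by
    rcases h x a with hxa | hxa
    · exact ((h x b).resolve_left (hxa ▸ hab)).trans hGab.symm
    · exact hxa
  exact hcd (by rw [hG c, hG d])

section Covariance

variable {α : Type*} [Fintype α] {w : α → ℝ}

noncomputable def weightedCov (w F G : α → ℝ) : ℝ :=
  (∑ a, w a * (F a * G a)) - (∑ a, w a * F a) * (∑ a, w a * G a)

theorem two_mul_weightedCov (hsum : ∑ a, w a = 1) (F G : α → ℝ) :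
    2 * weightedCov w F G = ∑ a, ∑ b, w a * w b * ((F a - F b) * (G a - G b)) := by
  simp only [weightedCov, show ∀ a b, w a * w b * ((F a - F b) * (G a - G b)) =
      w a * (F a * G a) * w b - w a * F a * (w b * G b) - w a * G a * (w b * F b)
        + w a * (w b * (F b * G b)) from fun a b => by ring,
    Finset.sum_add_distrib, Finset.sum_sub_distrib, ← Finset.mul_sum, ← Finset.sum_mul, hsum]
  ring

theorem weightedCov_nonneg (hw : ∀ a, 0 ≤ w a) (hsum : ∑ a, w a = 1) {F G : α → ℝ}
    (hFG : Monovary F G) : 0 ≤ weightedCov w F G := by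
  have : 0 ≤ 2 * weightedCov w F G := by
    rw [two_mul_weightedCov hsum]
    exact Finset.sum_nonneg fun a _ => Finset.sum_nonneg fun b _ =>
      mul_nonneg (mul_nonneg (hw a) (hw b)) (hFG.sub_mul_sub_nonneg b a)
  linarith

theorem weightedCov_eq_zero_iff (hw : ∀ a, 0 < w a) (hsum : ∑ a, w a = 1) {F G : α → ℝ}
    (hFG : Monovary F G) :
    weightedCov w F G = 0 ↔ (∀ a b, F a = F b) ∨ ∀ a b, G a = G b := by
  have hterm : ∀ a b, 0 ≤ w a * w b * ((F a - F b) * (G a - G b)) := fun a b =>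
    mul_nonneg (mul_pos (hw a) (hw b)).le (hFG.sub_mul_sub_nonneg b a)
  have hpairs : weightedCov w F G = 0 ↔ ∀ a b, F a = F b ∨ G a = G b := by
    rw [← mul_eq_zero_iff_left two_ne_zero, two_mul_weightedCov hsum,
      Fintype.sum_eq_zero_iff_of_nonneg fun a => Fintype.sum_nonneg (hterm a)]
    simp only [funext_iff, Pi.zero_apply]
    refine forall_congr' fun a => ?_
    rw [Fintype.sum_eq_zero_iff_of_nonneg (hterm a), funext_iff]
    refine forall_congr' fun b => ?_
    simp [(hw a).ne', (hw b).ne', sub_eq_zero]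
  rw [hpairs]
  refine ⟨forall_eq_or_forall_eq_of_forall_eq_or_eq, ?_⟩
  rintro (hF | hG) a b
  exacts [Or.inl (hF a b), Or.inr (hG a b)]

end Covariance

section DependsOn

variable {ι : Type*} {π : ι → Type*} {β γ : Type*}

theorem dependsOn_iff_forall_notMem [Finite ι] [DecidableEq ι] {f : (∀ i, π i) → β}
    {s : Set ι} : DependsOn f s ↔ ∀ i ∉ s, DependsOn f {i}ᶜ := by
  refine ⟨fun hf i hi => hf.mono (Set.subset_compl_singleton_iff.2 hi), fun h => ?_⟩
  have := Fintype.ofFinite ι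
  suffices key : ∀ t : Finset ι, ∀ x y : ∀ i, π i,
      (∀ i ∉ t, x i = y i) → (∀ i ∈ s, x i = y i) → f x = f y from
    fun x y hxy => key Finset.univ x y (by simp) hxy
  intro t
  induction t using Finset.induction_on with
  | empty => exact fun x y hxy _ => congrArg f (funext fun i => hxy i (Finset.notMem_empty i))
  | @insert j t _ ih =>
    intro x y hxy hs
    have hjump : f x = f (update x j (y j)) := by
      by_cases hj : j ∈ s
      · rw [← hs j hj, update_eq_self]
      · exact h j hj fun i hi => (update_of_ne hi _ _).symm
    rw [hjump]
    refine ih _ y (fun i hi => ?_) (fun i hi => ?_) <;>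
      rcases eq_or_ne i j with rfl | hij <;> simp_all

theorem forall_dependsOn_or_dependsOn_iff [Finite ι] [DecidableEq ι] {f : (∀ i, π i) → β}
    {g : (∀ i, π i) → γ} :
    (∀ i, DependsOn f {i}ᶜ ∨ DependsOn g {i}ᶜ) ↔ ∃ s, DependsOn f s ∧ DependsOn g sᶜ := by
  constructor
  · intro h
    refine ⟨{i | ¬DependsOn f {i}ᶜ}, dependsOn_iff_forall_notMem.2 fun i hi => not_not.1 hi,
      dependsOn_iff_forall_notMem.2 fun i hi => (h i).resolve_left (not_not.1 hi)⟩
  · rintro ⟨s, hf, hg⟩ i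
    by_cases hi : i ∈ s
    · exact Or.inr (hg.mono (Set.subset_compl_singleton_iff.2 (not_not.2 hi)))
    · exact Or.inl (hf.mono (Set.subset_compl_singleton_iff.2 hi))

end DependsOn

section OneVariableAverage

variable {m n : ℕ} {w : Fin m → ℝ} {f : (Fin n → Fin m) → ℝ} {i : Fin n}

theorem avg1_monotone (hw : ∀ a, 0 ≤ w a) (hf : Monotone f) (i : Fin n) :
    Monotone (avg1 m n w f i) := fun _ _ hab =>
  Finset.sum_le_sum fun y _ =>
    mul_le_mul_of_nonneg_left (hf (update_mono hab)) (Finset.prod_nonneg fun j _ => hw (y j))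

theorem update_eq_of_avg1_eq (hw : ∀ a, 0 < w a) (hf : Monotone f) {a b : Fin m} (hab : a ≤ b)
    (h : avg1 m n w f i a = avg1 m n w f i b) (y : Fin n → Fin m) :
    f (update y i a) = f (update y i b) := by
  have hweight : ∀ z : Fin n → Fin m, 0 < ∏ j, w (z j) := fun z =>
    Finset.prod_pos fun j _ => hw (z j)
  have hinc : ∀ z, 0 ≤ (∏ j, w (z j)) * (f (update z i b) - f (update z i a)) := fun z =>
    mul_nonneg (hweight z).le (sub_nonneg.2 (hf (update_mono hab)))
  have hzero : ∑ z, (∏ j, w (z j)) * (f (update z i b) - f (update z i a)) = 0 := by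
    simp only [mul_sub, Finset.sum_sub_distrib]
    exact sub_eq_zero.2 h.symm
  have hy := congr_fun ((Fintype.sum_eq_zero_iff_of_nonneg hinc).1 hzero) y
  rcases mul_eq_zero.1 hy with hy | hy
  · exact absurd hy (hweight y).ne'
  · exact (sub_eq_zero.1 hy).symm

theorem avg1_const_iff_dependsOn (hw : ∀ a, 0 < w a) (hf : Monotone f) :
    (∀ a b, avg1 m n w f i a = avg1 m n w f i b) ↔ DependsOn f {i}ᶜ := by
  constructor
  · intro h x y hxy
    have hupdate : ∀ a b, f (update x i a) = f (update x i b) := fun a b => by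
      rcases le_total a b with hab | hba
      exacts [update_eq_of_avg1_eq hw hf hab (h a b) x,
        (update_eq_of_avg1_eq hw hf hba (h b a) x).symm]
    calc f x = f (update x i (x i)) := by rw [update_eq_self]
      _ = f (update x i (y i)) := hupdate _ _
      _ = f y := congrArg f (update_eq_iff.2 ⟨rfl, hxy⟩)
  · intro hf a b
    exact Finset.sum_congr rfl fun y _ =>
      congrArg _ (hf fun j hj => (update_of_ne hj _ _).trans (update_of_ne hj _ _).symm)

end OneVariableAverage

/-- For monotone `f, g` on `{0,…,m-1}^n` with full-support product measure,
`∑_i (E[f_i g_i] - E[f_i]E[g_i]) = 0` iff there is a partition `[n] = S ⊔ Sᶜ` such that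
`f` depends only on coordinates in `S` and `g` depends only on coordinates in `Sᶜ`. -/
theorem stmt6 (m n : ℕ) (w : Fin m → ℝ) (hw : ∀ a, 0 < w a) (hsum : ∑ a, w a = 1)
    (f g : (Fin n → Fin m) → ℝ) (hf : Monotone f) (hg : Monotone g) :
    (∑ i : Fin n,
      ((∑ a, w a * (avg1 m n w f i a * avg1 m n w g i a)) -
        (∑ a, w a * avg1 m n w f i a) * (∑ a, w a * avg1 m n w g i a))) = 0 ↔
    ∃ S : Set (Fin n),
      (∀ x y : Fin n → Fin m, (∀ i ∈ S, x i = y i) → f x = f y) ∧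
      (∀ x y : Fin n → Fin m, (∀ i ∉ S, x i = y i) → g x = g y) := by
  have hw₀ : ∀ a, 0 ≤ w a := fun a => (hw a).le
  have hmonovary : ∀ i, Monovary (avg1 m n w f i) (avg1 m n w g i) := fun i =>
    (avg1_monotone hw₀ hf i).monovary (avg1_monotone hw₀ hg i)
  change ∑ i, weightedCov w (avg1 m n w f i) (avg1 m n w g i) = 0 ↔
    ∃ S : Set (Fin n), DependsOn f S ∧ DependsOn g Sᶜ
  rw [Fintype.sum_eq_zero_iff_of_nonneg
      fun i => weightedCov_nonneg hw₀ hsum (hmonovary i),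
    ← forall_dependsOn_or_dependsOn_iff]
  simp only [funext_iff, Pi.zero_apply, weightedCov_eq_zero_iff hw hsum (hmonovary _),
    avg1_const_iff_dependsOn hw hf, avg1_const_iff_dependsOn hw hg]
end

section
/- Let \omega(1)/n \le p \le 1/2 and let f : \{-1,1\}^n \to \{-1,1\} be f(x) = sign(x_1 + \cdots + x_n - n(1-2p)), the p-biased majority. Under the p-biased measure (where each coordinate is -1 with probability p), the sum of the degree-1 p-biased Fourier coefficients satisfies \sum_{i=1}^n \hat{f_p}(i) = (1/(2\sqrt{p(1-p)})) E[|\sum_i x_i - n(1-2p)|] \ge c\sqrt{n} for a universal constant c > 0. -/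
/-!
Write `x_i - (1 - 2p) = Y(x_i)` for the centred bits and `T = ∑ Y(x_i)`. Since `f = sign T`, the sum
of the degree-one coefficients is `E[f · T] / (2√(p(1-p))) = E|T| / (2√(p(1-p)))`, so it suffices to
show `E|T| ≥ √(Var T) / 2`. Two applications of Cauchy–Schwarz give `E[T²]³ ≤ E[|T|]² E[T⁴]`, and
for a sum of independent centred variables `E[T⁴] = n E[Y⁴] + 3n(n-1) E[Y²]² ≤ 4 (E[T²])²` as
soon as `Y² ≤ Var T`; for the bits `Y² ≤ 4 ≤ 4np(1-p) = Var T` once `np ≥ 2`.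
-/

open Finset

theorem sum_mul_sq_pow_three_le {ι : Type*} (s : Finset ι) {w : ι → ℝ} (X : ι → ℝ)
    (hw : ∀ i ∈ s, 0 ≤ w i) :
    (∑ i ∈ s, w i * X i ^ 2) ^ 3 ≤ (∑ i ∈ s, w i * |X i|) ^ 2 * ∑ i ∈ s, w i * X i ^ 4 := by
  have habs : ∀ i, X i ^ 2 = |X i| ^ 2 ∧ X i ^ 4 = |X i| ^ 4 := fun i =>
    ⟨(even_two.pow_abs _).symm, ((by decide : Even 4).pow_abs _).symm⟩
  have hAB : (∑ i ∈ s, w i * X i ^ 2) ^ 2 ≤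
      (∑ i ∈ s, w i * |X i|) * ∑ i ∈ s, w i * |X i| ^ 3 :=
    sum_sq_le_sum_mul_sum_of_sq_le_mul s (fun i hi => by have := hw i hi; positivity)
      (fun i hi => by have := hw i hi; positivity)
      fun i _ => le_of_eq (by rw [(habs i).1]; ring)
  have hCA : (∑ i ∈ s, w i * |X i| ^ 3) ^ 2 ≤
      (∑ i ∈ s, w i * X i ^ 2) * ∑ i ∈ s, w i * X i ^ 4 :=
    sum_sq_le_sum_mul_sum_of_sq_le_mul s (fun i hi => by have := hw i hi; positivity)
      (fun i hi => by have := hw i hi; positivity)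
      fun i _ => le_of_eq (by rw [(habs i).1, (habs i).2]; ring)
  set A := ∑ i ∈ s, w i * X i ^ 2
  set B := ∑ i ∈ s, w i * |X i|
  set C := ∑ i ∈ s, w i * |X i| ^ 3
  set D := ∑ i ∈ s, w i * X i ^ 4
  have hA : 0 ≤ A := sum_nonneg fun i hi => by have := hw i hi; positivity
  have hD : 0 ≤ D := sum_nonneg fun i hi => by have := hw i hi; positivity
  have hA4 : A * A ^ 3 ≤ A * (B ^ 2 * D) := calc
    A * A ^ 3 = (A ^ 2) ^ 2 := by ring
    _ ≤ (B * C) ^ 2 := pow_le_pow_left₀ (sq_nonneg A) hAB 2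
    _ = B ^ 2 * C ^ 2 := by ring
    _ ≤ B ^ 2 * (A * D) := mul_le_mul_of_nonneg_left hCA (sq_nonneg B)
    _ = A * (B ^ 2 * D) := by ring
  rcases hA.eq_or_lt with hA0 | hApos
  · rw [← hA0, zero_pow three_ne_zero]
    exact mul_nonneg (sq_nonneg B) hD
  · exact le_of_mul_le_mul_left hA4 hApos

section ProductExpectation

variable {α : Type*} [Fintype α] (q : α → ℝ)

noncomputable def productExpect {n : ℕ} (g : (Fin n → α) → ℝ) : ℝ :=
  ∑ s, (∏ i, q (s i)) * g s

theorem productExpect_succ {n : ℕ} (g : (Fin (n + 1) → α) → ℝ) :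
    productExpect q g = ∑ a, q a * productExpect q (fun t => g (Fin.cons a t)) := by
  rw [productExpect, ← (Fin.consEquiv fun _ => α).sum_comp, Fintype.sum_prod_type]
  refine sum_congr rfl fun a _ => ?_
  rw [productExpect, mul_sum]
  refine sum_congr rfl fun t _ => ?_
  simp [Fin.consEquiv, Fin.prod_univ_succ, mul_assoc]

theorem productExpect_sum_pow_succ (Y : α → ℝ) (n k : ℕ) :
    productExpect q (fun s : Fin (n + 1) → α => (∑ i, Y (s i)) ^ k)
      = ∑ j ∈ range (k + 1), (∑ a, q a * Y a ^ j) *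
          productExpect q (fun t : Fin n → α => (∑ i, Y (t i)) ^ (k - j)) * k.choose j := by
  rw [productExpect_succ]
  simp only [Fin.sum_univ_succ, Fin.cons_zero, Fin.cons_succ, add_pow, productExpect, mul_sum,
    sum_mul]
  conv_rhs => rw [sum_comm]
  rw [sum_comm]
  refine sum_congr rfl fun t _ => ?_
  rw [sum_comm]
  refine sum_congr rfl fun j _ => sum_congr rfl fun a _ => ?_
  ring

variable {q}

theorem productExpect_one (hq : ∑ a, q a = 1) (n : ℕ) :
    productExpect q (fun _ : Fin n → α => (1 : ℝ)) = 1 := by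
  induction n with
  | zero => simp [productExpect]
  | succ n ih => simp [productExpect_succ, ih, hq]

variable {Y : α → ℝ}

theorem productExpect_sum (hq : ∑ a, q a = 1) (hY : ∑ a, q a * Y a = 0) (n : ℕ) :
    productExpect q (fun s : Fin n → α => ∑ i, Y (s i)) = 0 := by
  induction n with
  | zero => simp [productExpect]
  | succ n ih =>
    simpa [sum_range_succ, ih, hq, hY] using productExpect_sum_pow_succ q Y n 1

theorem productExpect_sum_sq (hq : ∑ a, q a = 1) (hY : ∑ a, q a * Y a = 0) (n : ℕ) :
    productExpect q (fun s : Fin n → α => (∑ i, Y (s i)) ^ 2) = n * ∑ a, q a * Y a ^ 2 := by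
  induction n with
  | zero => simp [productExpect]
  | succ n ih =>
    rw [productExpect_sum_pow_succ]
    simp only [sum_range_succ, sum_range_zero, Nat.reduceSub, pow_zero, pow_one, mul_one, hq, hY,
      ih, productExpect_sum hq hY, productExpect_one hq, Nat.choose, Nat.cast_add, Nat.cast_one]
    ring

theorem productExpect_sum_pow_four (hq : ∑ a, q a = 1) (hY : ∑ a, q a * Y a = 0) (n : ℕ) :
    productExpect q (fun s : Fin n → α => (∑ i, Y (s i)) ^ 4)
      = n * ∑ a, q a * Y a ^ 4 + 3 * n * (n - 1) * (∑ a, q a * Y a ^ 2) ^ 2 := by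
  induction n with
  | zero => simp [productExpect]
  | succ n ih =>
    rw [productExpect_sum_pow_succ]
    simp only [sum_range_succ, sum_range_zero, Nat.reduceSub, pow_zero, pow_one, mul_one, hq, hY,
      ih, productExpect_sum hq hY, productExpect_one hq, productExpect_sum_sq hq hY, Nat.choose,
      Nat.cast_add, Nat.cast_one]
    ring

theorem productExpect_sum_pow_four_le (hq0 : ∀ a, 0 ≤ q a) (hq : ∑ a, q a = 1)
    (hY : ∑ a, q a * Y a = 0) {n : ℕ} (hYV : ∀ a, Y a ^ 2 ≤ n * ∑ b, q b * Y b ^ 2) :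
    productExpect q (fun s : Fin n → α => (∑ i, Y (s i)) ^ 4)
      ≤ 4 * (n * ∑ a, q a * Y a ^ 2) ^ 2 := by
  set σ2 := ∑ a, q a * Y a ^ 2
  have hσ2 : 0 ≤ σ2 := sum_nonneg fun a _ => mul_nonneg (hq0 a) (sq_nonneg _)
  have hκ : ∑ a, q a * Y a ^ 4 ≤ σ2 * (n * σ2) := by
    rw [sum_mul]
    refine sum_le_sum fun a _ => ?_
    calc q a * Y a ^ 4 = q a * Y a ^ 2 * Y a ^ 2 := by ring
      _ ≤ q a * Y a ^ 2 * (n * σ2) :=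
        mul_le_mul_of_nonneg_left (hYV a) (mul_nonneg (hq0 a) (sq_nonneg _))
  rw [productExpect_sum_pow_four hq hY]
  have hn : (0 : ℝ) ≤ n := n.cast_nonneg
  nlinarith [mul_le_mul_of_nonneg_left hκ hn, mul_nonneg hn (sq_nonneg σ2)]

theorem sqrt_le_two_mul_productExpect_abs_sum (hq0 : ∀ a, 0 ≤ q a) (hq : ∑ a, q a = 1)
    (hY : ∑ a, q a * Y a = 0) {n : ℕ} (hYV : ∀ a, Y a ^ 2 ≤ n * ∑ b, q b * Y b ^ 2) :
    √(n * ∑ a, q a * Y a ^ 2) ≤ 2 * productExpect q (fun s : Fin n → α => |∑ i, Y (s i)|) := by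
  set V := n * ∑ a, q a * Y a ^ 2
  set E := productExpect q (fun s : Fin n → α => |∑ i, Y (s i)|)
  have hE : 0 ≤ E := sum_nonneg fun s _ =>
    mul_nonneg (prod_nonneg fun i _ => hq0 _) (abs_nonneg _)
  have hV : 0 ≤ V :=
    mul_nonneg n.cast_nonneg (sum_nonneg fun a _ => mul_nonneg (hq0 a) (sq_nonneg _))
  have hmoment : V ^ 3 ≤ E ^ 2 * (4 * V ^ 2) := by
    have := sum_mul_sq_pow_three_le univ (w := fun s : Fin n → α => ∏ i, q (s i))
      (fun s => ∑ i, Y (s i))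
      (fun s _ => prod_nonneg fun i _ => hq0 (s i))
    calc V ^ 3 = productExpect q (fun s : Fin n → α => (∑ i, Y (s i)) ^ 2) ^ 3 := by
          rw [productExpect_sum_sq hq hY]
      _ ≤ E ^ 2 * productExpect q (fun s : Fin n → α => (∑ i, Y (s i)) ^ 4) := this
      _ ≤ E ^ 2 * (4 * V ^ 2) :=
        mul_le_mul_of_nonneg_left (productExpect_sum_pow_four_le hq0 hq hY hYV) (sq_nonneg E)
  have hVE : V ≤ (2 * E) ^ 2 := by
    rcases hV.eq_or_lt with hV0 | hVpos
    · rw [← hV0]; positivity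
    · nlinarith [pow_pos hVpos 2]
  exact Real.sqrt_le_iff.mpr ⟨by positivity, hVE⟩

end ProductExpectation

theorem sign_mul_self_eq_abs (x : ℝ) : (if 0 ≤ x then (1 : ℝ) else -1) * x = |x| := by
  split_ifs with hx
  · rw [one_mul, abs_of_nonneg hx]
  · rw [neg_one_mul, abs_of_neg (not_le.mp hx)]

section BiasedCube

variable (p : ℝ)

def biasedBit (b : Bool) : ℝ := if b then 1 - p else p

def centeredBit (b : Bool) : ℝ := (if b then 1 else -1) - (1 - 2 * p)

theorem sum_biasedBit : ∑ b, biasedBit p b = 1 := by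
  simp only [Fintype.sum_bool, biasedBit, ↓reduceIte, Bool.false_eq_true, sub_add_cancel]

theorem sum_biasedBit_mul_centeredBit : ∑ b, biasedBit p b * centeredBit p b = 0 := by
  simp only [Fintype.sum_bool, biasedBit, centeredBit, ↓reduceIte, Bool.false_eq_true]
  ring

theorem sum_biasedBit_mul_centeredBit_sq :
    ∑ b, biasedBit p b * centeredBit p b ^ 2 = 4 * (p * (1 - p)) := by
  simp only [Fintype.sum_bool, biasedBit, centeredBit, ↓reduceIte, Bool.false_eq_true]
  ring

theorem centeredBit_sq_le {p : ℝ} (hp0 : 0 ≤ p) (hp1 : p ≤ 1) (b : Bool) :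
    centeredBit p b ^ 2 ≤ 4 := by
  cases b <;> simp only [centeredBit, ↓reduceIte, Bool.false_eq_true] <;> nlinarith

theorem sqrt_mul_le_productExpect_abs_sum_centeredBit {p : ℝ} (hp0 : 0 ≤ p) (hp1 : p ≤ 1)
    {n : ℕ} (hnp : 1 ≤ n * (p * (1 - p))) :
    √n * √(p * (1 - p)) ≤
      productExpect (biasedBit p) (fun s : Fin n → Bool => |∑ i, centeredBit p (s i)|) := by
  have h := sqrt_le_two_mul_productExpect_abs_sum (q := biasedBit p) (Y := centeredBit p)
    (fun b => by cases b <;> simp only [biasedBit, ↓reduceIte, Bool.false_eq_true] <;> linarith)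
    (sum_biasedBit p) (sum_biasedBit_mul_centeredBit p) (n := n) fun b => by
      rw [sum_biasedBit_mul_centeredBit_sq]; linarith [centeredBit_sq_le hp0 hp1 b]
  rw [sum_biasedBit_mul_centeredBit_sq, mul_left_comm, Real.sqrt_mul zero_le_four,
    Real.sqrt_mul n.cast_nonneg, show √4 = 2 by norm_num [show (4 : ℝ) = 2 ^ 2 by norm_num]] at h
  linarith

end BiasedCube

/-- For the `p`-biased majority `f(x) = sign(x_1 + ⋯ + x_n - n(1-2p))` on `{-1,1}^n`
with `ω(1)/n ≤ p ≤ 1/2`, the sum of the degree-1 `p`-biased Fourier coefficients equals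
`(1/(2√(p(1-p)))) E[|∑ x_i - n(1-2p)|]` and is at least `c√n` for a universal `c > 0`. -/
theorem stmt17 :
    ∃ c : ℝ, 0 < c ∧ ∃ A : ℝ, 0 < A ∧ ∀ (n : ℕ) (p : ℝ), A / n ≤ p → p ≤ 1 / 2 →
      let w : (Fin n → Bool) → ℝ := fun s => ∏ i, (if s i then 1 - p else p)
      let S : (Fin n → Bool) → ℝ := fun s => ∑ i, (if s i then (1:ℝ) else -1)
      let f : (Fin n → Bool) → ℝ := fun s => if 0 ≤ S s - n * (1 - 2 * p) then 1 else -1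
      let coef : Fin n → ℝ := fun i => ∑ s, w s *
        (f s * (((if s i then (1:ℝ) else -1) - (1 - 2 * p)) / (2 * Real.sqrt (p * (1 - p)))))
      (∑ i, coef i)
          = (1 / (2 * Real.sqrt (p * (1 - p)))) * ∑ s, w s * |S s - n * (1 - 2 * p)| ∧
        c * Real.sqrt n ≤ ∑ i, coef i := by
  refine ⟨1 / 2, by norm_num, 2, by norm_num, fun n p hA hp => ?_⟩
  intro w S f coef
  have hcentered : ∀ s : Fin n → Bool,
      ∑ i, ((if s i then (1 : ℝ) else -1) - (1 - 2 * p)) = S s - n * (1 - 2 * p) := fun s => by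
    simp only [S, sum_sub_distrib, sum_const, card_univ, Fintype.card_fin, nsmul_eq_mul, mul_one]
    ring
  have hsum : ∑ i, coef i
      = (1 / (2 * √(p * (1 - p)))) * ∑ s, w s * |S s - n * (1 - 2 * p)| := by
    rw [sum_comm, mul_sum]
    refine sum_congr rfl fun s _ => ?_
    rw [← mul_sum, ← mul_sum, ← sum_div, hcentered s, ← sign_mul_self_eq_abs]
    ring
  refine ⟨hsum, ?_⟩
  rcases n.eq_zero_or_pos with rfl | hn
  · simp
  have hn' : (0 : ℝ) < n := by exact_mod_cast hn
  have hp0 : 0 < p := (div_pos two_pos hn').trans_le hA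
  have hnp : 1 ≤ n * (p * (1 - p)) := by
    have := (div_le_iff₀ hn').mp hA
    nlinarith
  have hE := sqrt_mul_le_productExpect_abs_sum_centeredBit hp0.le (by linarith) hnp
  simp only [productExpect, centeredBit, hcentered] at hE
  rw [hsum]
  have hσ : 0 < √(p * (1 - p)) := Real.sqrt_pos.mpr (by nlinarith)
  calc 1 / 2 * √n = (1 / (2 * √(p * (1 - p)))) * (√n * √(p * (1 - p))) := by
        field_simp
    _ ≤ _ := mul_le_mul_of_nonneg_left hE (by positivity)
end

section
/- For sufficiently large d (a perfect square), the rational function a_d(t) = T_{\sqrt{d}}(t(1+3/d)) / T_{\sqrt{d}}(1+3/d), where T_c is the degree-c Chebyshev polynomial of the first kind, satisfies: (i) |a_d(t)| \le 1 for all t \in [0,1]; (ii) a_d(1) \le 1 with a_d attaining value bounded by 1 at t=1 in absolute value; and (iii) for d \ge 4 and t \in [0, 1 - 3/d], |a_d(t)| \le 1/4. -/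
open Polynomial Chebyshev Real

theorem stmt19_T_real_cosh (t : ℝ) (n : ℤ) :
    (Chebyshev.T ℝ n).eval (Real.cosh t) = Real.cosh (n * t) := by
  have h := Chebyshev.T_complex_cos (t * Complex.I) n
  rw [Complex.cos_mul_I] at h
  have h2 := Chebyshev.complex_ofReal_eval_T (Real.cosh t) n
  rw [Complex.ofReal_cosh, h] at h2
  have : (n : ℂ) * (t * Complex.I) = ((n * t : ℝ) : ℂ) * Complex.I := by push_cast; ring
  rw [this, Complex.cos_mul_I, ← Complex.ofReal_cosh] at h2
  exact_mod_cast h2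

theorem stmt19_abs_le (n : ℤ) {x : ℝ} (h1 : -1 ≤ x) (h2 : x ≤ 1) :
    |(Chebyshev.T ℝ n).eval x| ≤ 1 := by
  rw [← Real.cos_arccos h1 h2, Chebyshev.T_real_cos]
  exact Real.abs_cos_le_one _

theorem stmt19_eq_cosh (n : ℤ) {x : ℝ} (hx : 1 ≤ x) :
    (Chebyshev.T ℝ n).eval x = Real.cosh (n * Real.log (x + Real.sqrt (x ^ 2 - 1))) := by
  have hs0 : 0 ≤ Real.sqrt (x ^ 2 - 1) := Real.sqrt_nonneg _
  have hs : Real.sqrt (x ^ 2 - 1) ^ 2 = x ^ 2 - 1 := Real.sq_sqrt (by nlinarith)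
  have hpos : 0 < x + Real.sqrt (x ^ 2 - 1) := by nlinarith
  have hc : Real.cosh (Real.log (x + Real.sqrt (x ^ 2 - 1))) = x := by
    rw [Real.cosh_log hpos]
    field_simp
    nlinarith
  conv_lhs => rw [← hc]
  rw [stmt19_T_real_cosh]

theorem stmt19_mono (n : ℕ) {x y : ℝ} (hx : 1 ≤ x) (hxy : x ≤ y) :
    (Chebyshev.T ℝ (n : ℤ)).eval x ≤ (Chebyshev.T ℝ (n : ℤ)).eval y := by
  have hy : 1 ≤ y := hx.trans hxy
  rw [stmt19_eq_cosh _ hx, stmt19_eq_cosh _ hy]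
  rw [Real.cosh_le_cosh]
  have hLx : 0 ≤ Real.log (x + Real.sqrt (x ^ 2 - 1)) :=
    Real.log_nonneg (by nlinarith [Real.sqrt_nonneg (x ^ 2 - 1)])
  have hLy : 0 ≤ Real.log (y + Real.sqrt (y ^ 2 - 1)) :=
    Real.log_nonneg (by nlinarith [Real.sqrt_nonneg (y ^ 2 - 1)])
  have hn : (0 : ℝ) ≤ ((n : ℤ) : ℝ) := by positivity
  rw [abs_of_nonneg (by positivity), abs_of_nonneg (by positivity)]
  apply mul_le_mul_of_nonneg_left _ hn
  apply Real.log_le_log (by nlinarith [Real.sqrt_nonneg (x ^ 2 - 1)])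
  have : Real.sqrt (x ^ 2 - 1) ≤ Real.sqrt (y ^ 2 - 1) :=
    Real.sqrt_le_sqrt (by nlinarith)
  linarith

theorem stmt19_one_le (n : ℕ) {x : ℝ} (hx : 1 ≤ x) :
    1 ≤ (Chebyshev.T ℝ (n : ℤ)).eval x := by
  rw [stmt19_eq_cosh _ hx]; exact Real.one_le_cosh _

theorem stmt19_lower (k : ℕ) (hk : 100 ≤ k) :
    (4 : ℝ) ≤ (Chebyshev.T ℝ (k : ℤ)).eval (1 + 3 / (k : ℝ) ^ 2) := by
  have hk0 : (100 : ℝ) ≤ (k : ℝ) := by exact_mod_cast hk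
  have hkpos : (0 : ℝ) < k := by linarith
  set x : ℝ := 1 + 3 / (k : ℝ) ^ 2 with hxdef
  have hx1 : 1 ≤ x := by
    have : 0 < 3 / (k : ℝ) ^ 2 := by positivity
    simp [hxdef]; positivity
  rw [stmt19_eq_cosh _ hx1]
  set s := Real.sqrt (x ^ 2 - 1) with hsdef
  -- s ≥ √6 / k
  have h6 : (2.44 : ℝ) ≤ Real.sqrt 6 := by
    rw [show (2.44:ℝ) = Real.sqrt (2.44^2) by rw [Real.sqrt_sq]; norm_num]
    exact Real.sqrt_le_sqrt (by norm_num)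
  have h6' : Real.sqrt 6 ≤ 3 := by
    rw [show (3:ℝ) = Real.sqrt 9 by rw [show (9:ℝ) = 3^2 by norm_num, Real.sqrt_sq]; norm_num]
    exact Real.sqrt_le_sqrt (by norm_num)
  have hs6 : Real.sqrt 6 / k ≤ s := by
    have e : Real.sqrt 6 / (k:ℝ) = Real.sqrt (6 / (k:ℝ)^2) := by
      rw [show (6:ℝ) / (k:ℝ)^2 = (Real.sqrt 6 / k)^2 by
        rw [div_pow, Real.sq_sqrt]; norm_num]
      rw [Real.sqrt_sq (by positivity)]
    rw [hsdef, e]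
    apply Real.sqrt_le_sqrt
    rw [hxdef]
    have e2 : (1 + 3/(k:ℝ)^2)^2 - 1 = 6/(k:ℝ)^2 + (3/(k:ℝ)^2)^2 := by ring
    rw [e2]
    nlinarith [sq_nonneg (3 / (k:ℝ)^2)]
  have hspos : 0 ≤ s := Real.sqrt_nonneg _
  -- lower bound on k * log(x+s)
  have hxs1 : 1 + Real.sqrt 6 / k ≤ x + s := by
    have : (0:ℝ) < 3 / (k:ℝ)^2 := by positivity
    rw [hxdef]; linarith
  have hu : (0:ℝ) < 1 + Real.sqrt 6 / k := by positivity
  have hlog1 : Real.log (1 + Real.sqrt 6 / k) ≤ Real.log (x + s) :=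
    Real.log_le_log hu hxs1
  -- log(1+u) ≥ u/(1+u)
  have hlog2 : (Real.sqrt 6 / k) / (1 + Real.sqrt 6 / k) ≤ Real.log (1 + Real.sqrt 6 / k) := by
    have h := Real.log_le_sub_one_of_pos (x := (1 + Real.sqrt 6 / k)⁻¹) (by positivity)
    rw [Real.log_inv] at h
    have : (1:ℝ) - (1 + Real.sqrt 6 / k)⁻¹ = (Real.sqrt 6 / k) / (1 + Real.sqrt 6 / k) := by
      field_simp
      ring
    linarith [h, this]
  -- k * log(x+s) ≥ √6 k/(k+√6) ≥ 2.08 ≥ log 8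
  have hkt : (2.08 : ℝ) ≤ (k:ℝ) * Real.log (x + s) := by
    have e2 : (k:ℝ) * ((Real.sqrt 6 / k) / (1 + Real.sqrt 6 / k))
        = Real.sqrt 6 * k / (k + Real.sqrt 6) := by
      field_simp
    have h3 : (2.08:ℝ) ≤ Real.sqrt 6 * k / (k + Real.sqrt 6) := by
      rw [le_div_iff₀ (by positivity)]
      nlinarith
    calc (2.08:ℝ) ≤ Real.sqrt 6 * k / (k + Real.sqrt 6) := h3
      _ = (k:ℝ) * ((Real.sqrt 6 / k) / (1 + Real.sqrt 6 / k)) := e2.symm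
      _ ≤ (k:ℝ) * Real.log (x + s) := by
          apply mul_le_mul_of_nonneg_left _ hkpos.le
          linarith
  have hlog8 : Real.log 8 ≤ 2.08 := by
    have := Real.log_two_lt_d9
    have e : (8:ℝ) = 2 ^ (3:ℕ) := by norm_num
    rw [e, Real.log_pow]
    push_cast
    linarith
  have h8 : (8:ℝ) ≤ Real.exp ((k:ℝ) * Real.log (x + s)) := by
    calc (8:ℝ) = Real.exp (Real.log 8) := (Real.exp_log (by norm_num)).symm
      _ ≤ Real.exp ((k:ℝ) * Real.log (x + s)) := Real.exp_le_exp.mpr (by linarith)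
  have hcosh : Real.exp ((k:ℝ) * Real.log (x + s)) / 2 ≤ Real.cosh ((k:ℝ) * Real.log (x + s)) := by
    rw [Real.cosh_eq]
    have := Real.exp_pos (-((k:ℝ) * Real.log (x + s)))
    linarith
  have : ((k:ℤ):ℝ) = (k:ℝ) := by push_cast; ring
  rw [this]
  linarith

/-- Properties of the normalized Chebyshev functions
`a_d(t) = T_√d(t(1+3/d)) / T_√d(1+3/d)` (with `d = k²` a perfect square), for
sufficiently large `d`: (i) `|a_d(t)| ≤ 1` on `[0,1]`; (ii) `|a_d(1)| ≤ 1`;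
(iii) for `d ≥ 4`, `|a_d(t)| ≤ 1/4` on `[0, 1 - 3/d]`. -/
theorem stmt19 :
    ∃ K : ℕ, ∀ k : ℕ, K ≤ k →
      let d : ℝ := (k : ℝ) ^ 2
      let a : ℝ → ℝ := fun t =>
        (Polynomial.Chebyshev.T ℝ (k : ℤ)).eval (t * (1 + 3 / d)) /
          (Polynomial.Chebyshev.T ℝ (k : ℤ)).eval (1 + 3 / d)
      (∀ t ∈ Set.Icc (0:ℝ) 1, |a t| ≤ 1) ∧ |a 1| ≤ 1 ∧
        ((4:ℝ) ≤ d → ∀ t ∈ Set.Icc (0:ℝ) (1 - 3 / d), |a t| ≤ 1 / 4) := by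
  refine ⟨100, fun k hk => ?_⟩
  intro d a
  have hk0 : (100:ℝ) ≤ (k:ℝ) := by exact_mod_cast hk
  have hd : d = (k:ℝ)^2 := rfl
  have hd0 : (0:ℝ) < d := by rw [hd]; positivity
  have hx1 : (1:ℝ) ≤ 1 + 3 / d := by
    have : (0:ℝ) < 3 / d := by positivity
    linarith
  set B : ℝ := (Chebyshev.T ℝ (k : ℤ)).eval (1 + 3 / d) with hBdef
  have hB4 : (4:ℝ) ≤ B := stmt19_lower k hk
  have hB1 : (1:ℝ) ≤ B := by linarith
  have hB0 : (0:ℝ) < B := by linarith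
  have ha : ∀ t : ℝ, a t = (Chebyshev.T ℝ (k : ℤ)).eval (t * (1 + 3 / d)) / B := fun t => rfl
  have key : ∀ t ∈ Set.Icc (0:ℝ) 1, |(Chebyshev.T ℝ (k : ℤ)).eval (t * (1 + 3 / d))| ≤ B := by
    rintro t ⟨ht0, ht1⟩
    set y := t * (1 + 3 / d) with hydef
    have hy0 : 0 ≤ y := by positivity
    have hyx : y ≤ 1 + 3 / d := by
      calc y ≤ 1 * (1 + 3 / d) := by
            apply mul_le_mul_of_nonneg_right ht1 (by linarith)
        _ = 1 + 3 / d := one_mul _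
    rcases le_or_gt y 1 with h | h
    · have := stmt19_abs_le (k:ℤ) (by linarith) h
      linarith
    · have h1 : 1 ≤ (Chebyshev.T ℝ (k : ℤ)).eval y := stmt19_one_le k h.le
      have h2 : (Chebyshev.T ℝ (k : ℤ)).eval y ≤ B := stmt19_mono k h.le hyx
      rw [abs_of_nonneg (by linarith)]
      exact h2
  have main1 : ∀ t ∈ Set.Icc (0:ℝ) 1, |a t| ≤ 1 := by
    intro t ht
    rw [ha t, abs_div, abs_of_pos hB0, div_le_one hB0]
    exact key t ht
  refine ⟨main1, main1 1 (by constructor <;> norm_num), ?_⟩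
  intro hd4 t ht
  obtain ⟨ht0, ht1⟩ := ht
  have h3d : 3 / d ≤ 3 / 4 := by
    apply div_le_div_of_nonneg_left (by norm_num) (by norm_num) hd4
  have hy0 : 0 ≤ t * (1 + 3 / d) := by positivity
  have hy1 : t * (1 + 3 / d) ≤ 1 := by
    have h9 : (0:ℝ) ≤ 9 / d^2 := by positivity
    calc t * (1 + 3 / d) ≤ (1 - 3 / d) * (1 + 3 / d) := by
          apply mul_le_mul_of_nonneg_right ht1 (by linarith)
      _ = 1 - 9 / d^2 := by field_simp; ring
      _ ≤ 1 := by linarith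
  have habs : |(Chebyshev.T ℝ (k : ℤ)).eval (t * (1 + 3 / d))| ≤ 1 :=
    stmt19_abs_le (k:ℤ) (by linarith) hy1
  rw [ha t, abs_div, abs_of_pos hB0]
  calc |(Chebyshev.T ℝ (k : ℤ)).eval (t * (1 + 3 / d))| / B ≤ 1 / B := by
        gcongr
    _ ≤ 1 / 4 := one_div_le_one_div_of_le (by norm_num) hB4
end
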